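/- arXiv:2006.08193 — 6 statements merged into one kernel-verified Lean document; each statement's English description precedes it below -/
import Mathlib

section
/- Let P : Σ → ℝ² be given by P(x,y) = (f(x), H(x,y)) where f is differentiable with f'(x) ≥ λ₀ > √2 for all relevant x, and H is differentiable with |∂H/∂x| ≤ 1 and |∂H/∂y| ≤ 1. For α ≥ 1/(√2 − 1), define the cone C_α(z) = { (a,b) ∈ ℝ² : |b| ≤ α|a| }. Then the differential DP maps C_α into C_α; more precisely, if (a,b) ∈ C_α and (a',b') = DP(x,y)(a,b), then |a'| ≥ √2|a| and |b'| ≤ α|a'|. -/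
open Set

/-- Cone invariance for the Poincaré map of a geometric Lorenz attractor:
`P(x,y) = (f(x), H(x,y))` with `f' ≥ λ₀ > √2`, `|∂H/∂x| ≤ 1`, `|∂H/∂y| ≤ 1`.
If `(a,b)` lies in the cone `C_α = {|b| ≤ α|a|}` with `α ≥ 1/(√2−1)` and
`(a',b') = DP(x,y)(a,b)`, then `|a'| ≥ √2|a|` and `|b'| ≤ α|a'|`. -/
theorem lorenz_cone_invariance
    (S : Set (ℝ × ℝ)) (f : ℝ → ℝ) (H : ℝ → ℝ → ℝ)
    (f' Hx Hy : ℝ → ℝ → ℝ) (lam₀ α : ℝ)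
    (hlam₀ : lam₀ > Real.sqrt 2)
    (hα : α ≥ 1 / (Real.sqrt 2 - 1))
    (hf : ∀ z ∈ S, HasDerivAt f (f' z.1 z.2) z.1 ∧ f' z.1 z.2 ≥ lam₀)
    (hHx : ∀ z ∈ S, HasDerivAt (fun x => H x z.2) (Hx z.1 z.2) z.1 ∧
      |Hx z.1 z.2| ≤ 1)
    (hHy : ∀ z ∈ S, HasDerivAt (fun y => H z.1 y) (Hy z.1 z.2) z.2 ∧
      |Hy z.1 z.2| ≤ 1) :
    ∀ z ∈ S, ∀ a b a' b' : ℝ,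
      |b| ≤ α * |a| →
      a' = f' z.1 z.2 * a →
      b' = Hx z.1 z.2 * a + Hy z.1 z.2 * b →
      |a'| ≥ Real.sqrt 2 * |a| ∧ |b'| ≤ α * |a'| := by
  intro z hz a b a' b' hcone ha' hb'
  have hs2 : (1:ℝ) < Real.sqrt 2 := by
    have : (1:ℝ) = Real.sqrt 1 := (Real.sqrt_one).symm
    rw [this]; exact Real.sqrt_lt_sqrt (by norm_num) (by norm_num)
  have hpos : (0:ℝ) < Real.sqrt 2 - 1 := by linarith
  have hα1 : α * (Real.sqrt 2 - 1) ≥ 1 := by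
    calc (1:ℝ) = (1 / (Real.sqrt 2 - 1)) * (Real.sqrt 2 - 1) := by field_simp
    _ ≤ α * (Real.sqrt 2 - 1) := mul_le_mul_of_nonneg_right hα (le_of_lt hpos)
  have hαpos : 0 < α := by nlinarith
  obtain ⟨-, hfd⟩ := hf z hz
  obtain ⟨-, hxb⟩ := hHx z hz
  obtain ⟨-, hyb⟩ := hHy z hz
  have hf2 : f' z.1 z.2 ≥ Real.sqrt 2 := le_trans (le_of_lt hlam₀) hfd
  have hA : |a'| ≥ Real.sqrt 2 * |a| := by
    rw [ha', abs_mul, abs_of_nonneg (by linarith : (0:ℝ) ≤ f' z.1 z.2)]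
    exact mul_le_mul_of_nonneg_right hf2 (abs_nonneg a)
  refine ⟨hA, ?_⟩
  have hb : |b'| ≤ (1 + α) * |a| := by
    rw [hb']
    calc |Hx z.1 z.2 * a + Hy z.1 z.2 * b| ≤ |Hx z.1 z.2 * a| + |Hy z.1 z.2 * b| := abs_add_le _ _
    _ = |Hx z.1 z.2| * |a| + |Hy z.1 z.2| * |b| := by rw [abs_mul, abs_mul]
    _ ≤ 1 * |a| + 1 * (α * |a|) := by
        have h1 : |Hx z.1 z.2| * |a| ≤ 1 * |a| :=
          mul_le_mul_of_nonneg_right hxb (abs_nonneg a)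
        have h2 : |Hy z.1 z.2| * |b| ≤ 1 * (α * |a|) := by
          nlinarith [abs_nonneg b, abs_nonneg (Hy z.1 z.2)]
        linarith
    _ = (1 + α) * |a| := by ring
  calc |b'| ≤ (1 + α) * |a| := hb
  _ ≤ α * (Real.sqrt 2 * |a|) := by nlinarith [abs_nonneg a]
  _ ≤ α * |a'| := by gcongr
end

section
/- Let f : [-1,1] \ {0} → (-1,1) be a Lorenz expanding map. For an open interval J ⊆ [-1,1] \ {0} and n ≥ 2, let D_n(J) = { t ∈ J : f^m(t) = 0 for some 1 ≤ m ≤ n−1 } (where f^m(t) is defined only when all intermediate iterates avoid 0), and D_1(J) = ∅. Suppose that for every n ≥ 1 and every connected component I of J \ D_n(J) one has #(I ∩ D_{n+2}(J)) ≤ 1. Then #D_{2n}(J) ≤ 2^n − 1 for every n ≥ 1; consequently J \ D_{2n}(J) has at most 2^n connected components, and some connected component I of J \ D_{2n}(J) has length |I| ≥ 2^{-n}|J|. -/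
open Set Filter MeasureTheory

/-- Basic facts about a connected component of `Ioo a b \ S` for `S` finite. -/
lemma lorenz_aux_comp_basic (a b : ℝ) {S : Set ℝ} (hS : S.Finite) {x : ℝ}
    (hx : x ∈ Ioo a b \ S) :
    sInf (connectedComponentIn (Ioo a b \ S) x) ∈ insert a S ∧
    (∀ y ∈ connectedComponentIn (Ioo a b \ S) x,
      sInf (connectedComponentIn (Ioo a b \ S) x) < y) := by
  set U := Ioo a b \ S with hU
  have hUopen : IsOpen U := IsOpen.sdiff isOpen_Ioo hS.isClosed
  set C := connectedComponentIn U x with hC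
  have hCopen : IsOpen C := hUopen.connectedComponentIn
  have hCsub : C ⊆ Ioo a b := (connectedComponentIn_subset U x).trans diff_subset
  have hCne : C.Nonempty := ⟨x, mem_connectedComponentIn hx⟩
  have hbdd : BddBelow C := ⟨a, fun y hy => le_of_lt (hCsub hy).1⟩
  set c := sInf C with hc
  -- c is not in C since C is open
  have hcnot : c ∉ C := by
    intro hmem
    obtain ⟨l, u, hlu, hsub⟩ := mem_nhds_iff_exists_Ioo_subset.mp (hCopen.mem_nhds hmem)
    have h1 : (l + c) / 2 ∈ Ioo l u := by
      constructor <;> [linarith [hlu.1]; linarith [hlu.1, hlu.2]]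
    have := csInf_le hbdd (hsub h1)
    linarith [hlu.1]
  have hlt : ∀ y ∈ C, c < y := fun y hy =>
    lt_of_le_of_ne (csInf_le hbdd hy) (fun h => hcnot (h ▸ hy))
  refine ⟨?_, hlt⟩
  by_contra hcmem
  rw [mem_insert_iff] at hcmem
  push_neg at hcmem
  obtain ⟨hca, hcS⟩ := hcmem
  have hcge : a ≤ c := le_csInf hCne (fun y hy => le_of_lt (hCsub hy).1)
  have hcgt : a < c := lt_of_le_of_ne hcge (Ne.symm hca)
  obtain ⟨y0, hy0⟩ := id hCne
  have hclt : c < b := lt_of_le_of_lt (csInf_le hbdd hy0) (hCsub hy0).2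
  have hcU : c ∈ U := ⟨⟨hcgt, hclt⟩, hcS⟩
  have hCcopen : IsOpen (connectedComponentIn U c) := hUopen.connectedComponentIn
  obtain ⟨l, u, hlu, hsub⟩ := mem_nhds_iff_exists_Ioo_subset.mp
    (hCcopen.mem_nhds (mem_connectedComponentIn hcU))
  obtain ⟨y, hyC, hyu⟩ := exists_lt_of_csInf_lt hCne (show sInf C < u from hlu.2)
  have hyIoo : y ∈ Ioo l u := ⟨lt_trans hlu.1 (hlt y hyC), hyu⟩
  have e1 : connectedComponentIn U c = connectedComponentIn U y :=
    connectedComponentIn_eq (hsub hyIoo)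
  have e2 : C = connectedComponentIn U y := connectedComponentIn_eq hyC
  have : c ∈ C := by
    rw [e2, ← e1]
    exact mem_connectedComponentIn hcU
  exact hcnot this

/-- The components of `Ioo a b \ S` are finite in number, at most `#S + 1`. -/
lemma lorenz_aux_comp_count (a b : ℝ) {S : Set ℝ} (hS : S.Finite) :
    {I : Set ℝ | ∃ x ∈ Ioo a b \ S, I = connectedComponentIn (Ioo a b \ S) x}.Finite ∧
    {I : Set ℝ | ∃ x ∈ Ioo a b \ S, I = connectedComponentIn (Ioo a b \ S) x}.ncard
      ≤ S.ncard + 1 := by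
  set U := Ioo a b \ S with hU
  set 𝒞 := {I : Set ℝ | ∃ x ∈ U, I = connectedComponentIn U x} with h𝒞
  have hmaps : ∀ I ∈ 𝒞, sInf I ∈ insert a S := by
    rintro I ⟨x, hx, rfl⟩
    exact (lorenz_aux_comp_basic a b hS hx).1
  have hinj : InjOn sInf 𝒞 := by
    rintro I1 ⟨x1, hx1, rfl⟩ I2 ⟨x2, hx2, rfl⟩ heq
    set C1 := connectedComponentIn U x1
    set C2 := connectedComponentIn U x2
    have h1 := lorenz_aux_comp_basic a b hS hx1
    have h2 := lorenz_aux_comp_basic a b hS hx2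
    have hne1 : C1.Nonempty := ⟨x1, mem_connectedComponentIn hx1⟩
    have hne2 : C2.Nonempty := ⟨x2, mem_connectedComponentIn hx2⟩
    obtain ⟨y1, hy1⟩ := hne1
    have hlt1 : sInf C1 < y1 := h1.2 y1 hy1
    obtain ⟨y2, hy2C, hy2⟩ := exists_lt_of_csInf_lt hne2 (heq ▸ hlt1)
    have hy2gt : sInf C1 < y2 := heq ▸ h2.2 y2 hy2C
    obtain ⟨y1', hy1'C, hy1'⟩ := exists_lt_of_csInf_lt ⟨y1, hy1⟩ hy2gt
    -- y2 ∈ [y1', y1] ⊆ C1 by ordConnectedness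
    have hord : OrdConnected C1 :=
      (isPreconnected_connectedComponentIn).ordConnected
    have hy2C1 : y2 ∈ C1 :=
      hord.out hy1'C hy1 ⟨le_of_lt hy1', le_of_lt hy2⟩
    have e1 : C1 = connectedComponentIn U y2 := connectedComponentIn_eq hy2C1
    have e2 : C2 = connectedComponentIn U y2 := connectedComponentIn_eq hy2C
    rw [e1, e2]
  have htarget : (insert a S).Finite := hS.insert a
  constructor
  · exact Set.Finite.of_finite_image ((htarget.subset (image_subset_iff.mpr hmaps))) hinj
  · calc 𝒞.ncard ≤ (insert a S).ncard :=
          Set.ncard_le_ncard_of_injOn sInf hmaps hinj htarget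
      _ ≤ S.ncard + 1 := Set.ncard_insert_le a S

/-- Counting discontinuities of iterates of a Lorenz expanding map: if every
connected component of `J \ D n` meets `D (n+2)` in at most one point, then
`D (2n)` has at most `2^n − 1` points, `J \ D (2n)` has at most `2^n`
connected components, and some component has length at least `2^{-n}|J|`. -/
theorem lorenz_discontinuity_counting
    (f f' : ℝ → ℝ) (a b : ℝ) (hab : a < b)
    (hJ : Ioo a b ⊆ Icc (-1:ℝ) 1 \ {0})
    (hderiv : ∀ x ∈ Icc (-1:ℝ) 1 \ {0},
      HasDerivWithinAt f (f' x) (Icc (-1:ℝ) 1 \ {0}) x)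
    (hrange : ∀ x ∈ Icc (-1:ℝ) 1 \ {0}, f x ∈ Ioo (-1:ℝ) 1)
    (hlim_left : Tendsto f (nhdsWithin 0 (Iio 0)) (nhds 1))
    (hlim_right : Tendsto f (nhdsWithin 0 (Ioi 0)) (nhds (-1)))
    (hexp : ∀ x ∈ Icc (-1:ℝ) 1 \ {0}, f' x > Real.sqrt 2)
    (D : ℕ → Set ℝ)
    (hD : ∀ n, D n = {t ∈ Ioo a b | ∃ m, 1 ≤ m ∧ m < n ∧
      f^[m] t = 0 ∧ ∀ i < m, f^[i] t ≠ 0})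
    (hDfin : ∀ n, (D n).Finite)
    (hcomp : ∀ n ≥ 1, ∀ x ∈ Ioo a b \ D n,
      ((connectedComponentIn (Ioo a b \ D n) x) ∩ D (n + 2)).ncard ≤ 1) :
    ∀ n ≥ 1,
      (D (2 * n)).ncard ≤ 2 ^ n - 1 ∧
      {I : Set ℝ | ∃ x ∈ Ioo a b \ D (2 * n),
        I = connectedComponentIn (Ioo a b \ D (2 * n)) x}.ncard ≤ 2 ^ n ∧
      ∃ x ∈ Ioo a b \ D (2 * n),
        volume (Ioo a b) / 2 ^ n ≤
          volume (connectedComponentIn (Ioo a b \ D (2 * n)) x) := by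
  -- D is monotone
  have hmono : ∀ m n : ℕ, m ≤ n → D m ⊆ D n := by
    intro m n hmn t ht
    rw [hD m] at ht
    rw [hD n]
    obtain ⟨htJ, k, hk1, hkm, hk⟩ := ht
    exact ⟨htJ, k, hk1, lt_of_lt_of_le hkm hmn, hk⟩
  have hDsub : ∀ n, D n ⊆ Ioo a b := by
    intro n t ht
    rw [hD n] at ht
    exact ht.1
  have hD1 : D 1 = ∅ := by
    rw [hD 1]
    ext t
    simp only [mem_setOf_eq, mem_empty_iff_false, iff_false, not_and]
    rintro _ ⟨m, h1, h2, _⟩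
    omega
  -- the step counting lemma
  have hstep : ∀ n : ℕ, 1 ≤ n → (D (n + 2)).ncard ≤ 2 * (D n).ncard + 1 := by
    intro n hn
    obtain ⟨h𝒞fin, h𝒞card⟩ := lorenz_aux_comp_count a b (hDfin n)
    set U := Ioo a b \ D n with hU
    set 𝒞 := {I : Set ℝ | ∃ x ∈ U, I = connectedComponentIn U x} with h𝒞
    -- the new points inject into the components
    have hinj : InjOn (fun t => connectedComponentIn U t) (D (n + 2) \ D n) := by
      intro t1 ht1 t2 ht2 heq
      by_contra hne
      have ht1U : t1 ∈ U := ⟨hDsub _ ht1.1, ht1.2⟩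
      have ht2U : t2 ∈ U := ⟨hDsub _ ht2.1, ht2.2⟩
      have heq' : connectedComponentIn U t2 = connectedComponentIn U t1 := heq.symm
      have hsub2 : {t1, t2} ⊆ connectedComponentIn U t1 ∩ D (n + 2) := by
        rintro t (rfl | rfl)
        · exact ⟨mem_connectedComponentIn ht1U, ht1.1⟩
        · exact ⟨heq' ▸ mem_connectedComponentIn ht2U, ht2.1⟩
      have hfin2 : (connectedComponentIn U t1 ∩ D (n + 2)).Finite :=
        (hDfin (n + 2)).subset inter_subset_right
      have : ({t1, t2} : Set ℝ).ncard ≤ 1 :=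
        le_trans (Set.ncard_le_ncard hsub2 hfin2) (hcomp n hn t1 ht1U)
      rw [Set.ncard_pair hne] at this
      omega
    have hmapsto : ∀ t ∈ D (n + 2) \ D n, connectedComponentIn U t ∈ 𝒞 := by
      intro t ht
      exact ⟨t, ⟨hDsub _ ht.1, ht.2⟩, rfl⟩
    have hdiff : (D (n + 2) \ D n).ncard ≤ 𝒞.ncard :=
      Set.ncard_le_ncard_of_injOn _ hmapsto hinj h𝒞fin
    have hsplit : (D (n + 2) \ D n).ncard + (D n).ncard = (D (n + 2)).ncard :=
      Set.ncard_diff_add_ncard_of_subset (hmono n (n + 2) (by omega)) (hDfin (n + 2))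
    have := h𝒞card
    omega
  -- the cardinality bound by induction
  have hcard : ∀ n : ℕ, 1 ≤ n → (D (2 * n)).ncard ≤ 2 ^ n - 1 := by
    intro n hn
    induction n, hn using Nat.le_induction with
    | base =>
      have h3 : (D 3).ncard ≤ 1 := by
        have := hstep 1 le_rfl
        rw [hD1] at this
        simpa using this
      have h2 : (D 2).ncard ≤ (D 3).ncard :=
        Set.ncard_le_ncard (hmono 2 3 (by omega)) (hDfin 3)
      simpa using h2.trans h3
    | succ n hn ih =>
      have hs := hstep (2 * n) (by omega)
      have h1 : (1:ℕ) ≤ 2 ^ n := Nat.one_le_two_pow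
      have h2 : (2:ℕ) ^ (n + 1) = 2 * 2 ^ n := by ring
      have : 2 * n + 2 = 2 * (n + 1) := by ring
      rw [this] at hs
      omega
  intro n hn
  have hDcard := hcard n hn
  obtain ⟨h𝒞fin, h𝒞card⟩ := lorenz_aux_comp_count a b (hDfin (2 * n))
  set S := D (2 * n) with hS
  set U := Ioo a b \ S with hU
  set 𝒞 := {I : Set ℝ | ∃ x ∈ U, I = connectedComponentIn U x} with h𝒞
  have h1 : (1:ℕ) ≤ 2 ^ n := Nat.one_le_two_pow
  have h𝒞le : 𝒞.ncard ≤ 2 ^ n := by omega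
  refine ⟨hDcard, h𝒞le, ?_⟩
  -- measure-theoretic pigeonhole
  have hUne : U.Nonempty := ((Set.Ioo_infinite hab).diff (hDfin (2 * n))).nonempty
  obtain ⟨x₀, hx₀⟩ := hUne
  have h𝒞ne : 𝒞.Nonempty := ⟨connectedComponentIn U x₀, x₀, hx₀, rfl⟩
  obtain ⟨C₀, hC₀mem, hC₀max⟩ := Set.exists_max_image 𝒞 volume h𝒞fin h𝒞ne
  obtain ⟨x, hxU, hxC⟩ := hC₀mem
  refine ⟨x, hxU, ?_⟩
  -- volume of J equals volume of U
  have hvolU : volume U = volume (Ioo a b) :=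
    measure_diff_null ((hDfin (2 * n)).measure_zero volume)
  set F := h𝒞fin.toFinset with hF
  have hFcard : F.card = 𝒞.ncard := (Set.ncard_eq_toFinset_card _ h𝒞fin).symm
  have hUsub : U ⊆ ⋃ C ∈ F, C := by
    intro t ht
    refine mem_biUnion (h𝒞fin.mem_toFinset.mpr ⟨t, ht, rfl⟩) (mem_connectedComponentIn ht)
  have hbound : volume (Ioo a b) ≤ (2:ENNReal) ^ n * volume C₀ := by
    calc volume (Ioo a b) = volume U := hvolU.symm
      _ ≤ volume (⋃ C ∈ F, C) := measure_mono hUsub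
      _ ≤ ∑ C ∈ F, volume C := measure_biUnion_finset_le F id
      _ ≤ F.card • volume C₀ := Finset.sum_le_card_nsmul F _ _
            (fun C hC => hC₀max C (h𝒞fin.mem_toFinset.mp hC))
      _ = (F.card : ENNReal) * volume C₀ := nsmul_eq_mul _ _
      _ ≤ (2:ENNReal) ^ n * volume C₀ := by
            apply mul_le_mul_left
            have hc : (F.card : ℕ) ≤ 2 ^ n := hFcard ▸ h𝒞le
            exact_mod_cast (Nat.cast_le (α := ENNReal)).mpr hc
  have := ENNReal.div_le_of_le_mul (mul_comm ((2:ENNReal) ^ n) (volume C₀) ▸ hbound)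
  rw [hxC] at this
  exact this
end

section
/- Every Lorenz expanding map f : [-1,1] \ {0} → (-1,1) is eventually onto: for every nonempty open interval J ⊆ [-1,1] \ {0} there exists an integer N > 0 such that ⋃_{i=0}^{N} f^i(J) ⊇ (-1,1). Here f^i(J) denotes the image of the set of points of J at which the i-th iterate of f is defined. -/
open Set Filter Topology Function

/-!
On each side of the discontinuity `f` extends continuously to `0` (by `1` from the left, by `-1`
from the right), and `x ↦ f x - √2 x` is strictly increasing there; by compactness it increases by
a uniform `ε > 0` across every interval of length at least `|J|`. So an interval `I` inside one
branch is mapped onto an interval of length at least `√2 |I| + ε`. If that image contains `0`,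
its longer half has length at least `(√2 |I| + ε) / 2` and an endpoint at `0`, so the image of this
half has an endpoint at `±1`. Either that image contains `0` as well, and then together with the
image of a whole branch it covers `(-1, 1)`, or it lies in one branch and is longer than `I` by
`ε / 2`. Since an interval inside one branch has length at most `1`, this cannot go on forever.
-/

theorem StrictMonoOn.exists_pos_add_le {G : ℝ → ℝ} {s t δ : ℝ} (hG : StrictMonoOn G (Icc s t))
    (hGc : ContinuousOn G (Icc s t)) (hδ : 0 < δ) :
    ∃ ε > 0, ∀ c ∈ Icc s t, ∀ d ∈ Icc s t, c + δ ≤ d → G c + ε ≤ G d := by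
  by_cases hst : s + δ ≤ t
  swap
  · exact ⟨1, one_pos, fun c hc d hd hcd => absurd (by linarith [hc.1, hd.2]) hst⟩
  have hsub : Icc s (t - δ) ⊆ Icc s t := Icc_subset_Icc_right (by linarith)
  have hshift : MapsTo (· + δ) (Icc s (t - δ)) (Icc s t) :=
    fun x hx => ⟨by linarith [hx.1], by linarith [hx.2]⟩
  obtain ⟨x₀, hx₀, hmin⟩ := isCompact_Icc.exists_isMinOn (nonempty_Icc.2 (by linarith))
    ((hGc.comp (continuous_add_const δ).continuousOn hshift).sub (hGc.mono hsub))
  refine ⟨G (x₀ + δ) - G x₀, sub_pos.2 (hG (hsub hx₀) (hshift hx₀) (by linarith)),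
    fun c hc d hd hcd => ?_⟩
  have hc' : c ∈ Icc s (t - δ) := ⟨hc.1, by linarith [hd.2]⟩
  have hmin_c : G (x₀ + δ) - G x₀ ≤ G (c + δ) - G c := hmin hc'
  have hmono : G (c + δ) ≤ G d := hG.monotoneOn (hshift hc') hd hcd
  linarith

theorem Ioo_subset_Icc_diff_zero_iff {c d : ℝ} (hcd : c < d) :
    Ioo c d ⊆ Icc (-1) 1 \ {0} ↔ -1 ≤ c ∧ d ≤ 1 ∧ (d ≤ 0 ∨ 0 ≤ c) := by
  rw [subset_sdiff, ← isClosed_Icc.closure_subset_iff, closure_Ioo hcd.ne,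
    Icc_subset_Icc_iff hcd.le, disjoint_singleton_right, mem_Ioo, not_and_or, not_lt, not_lt,
    and_assoc, or_comm]

theorem Ioo_update_subset_image_of_continuousOn {f : ℝ → ℝ} {c d v : ℝ} (hcd : c ≤ d)
    (h0 : (0 : ℝ) ∉ Ioo c d) (hF : ContinuousOn (update f 0 v) (Icc c d)) :
    Ioo (update f 0 v c) (update f 0 v d) ⊆ f '' Ioo c d := by
  have hEq : EqOn (update f 0 v) f (Ioo c d) :=
    fun x hx => update_of_ne (ne_of_mem_of_not_mem hx h0) _ _
  rw [← hEq.image_eq]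
  exact intermediate_value_Ioo hcd hF

theorem exists_zero_endpoint_half {A B : ℝ} (h0 : (0 : ℝ) ∈ Ioo A B) :
    ∃ c d, c < d ∧ (c = 0 ∨ d = 0) ∧ Ioo c d ⊆ Ioo A B \ {0} ∧ B - A ≤ 2 * (d - c) := by
  rcases le_total B (-A) with h | h
  · exact ⟨A, 0, h0.1, Or.inr rfl, subset_sdiff_singleton (Ioo_subset_Ioo_right h0.2.le) (by simp),
      by linarith⟩
  · exact ⟨0, B, h0.2, Or.inl rfl, subset_sdiff_singleton (Ioo_subset_Ioo_left h0.1.le) (by simp),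
      by linarith⟩

section Reached

variable {α : Type*} (f : α → α) (p : α) (J : Set α)

def reachedWithin (n : ℕ) : Set α :=
  ⋃ i ∈ Finset.range (n + 1), f^[i] '' {x ∈ J | ∀ m < i, f^[m] x ≠ p}

theorem reachedWithin_mono : Monotone (reachedWithin f p J) := fun m n hmn =>
  biUnion_subset_biUnion_left fun i hi => by
    simp only [Finset.coe_range, mem_Iio] at hi ⊢
    omega

theorem subset_reachedWithin_zero : J ⊆ reachedWithin f p J 0 := fun x hx =>
  mem_biUnion (Finset.mem_range.2 zero_lt_one) ⟨x, ⟨hx, fun m hm => absurd hm m.not_lt_zero⟩, rfl⟩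

theorem mapsTo_reachedWithin (n : ℕ) :
    MapsTo f (reachedWithin f p J n \ {p}) (reachedWithin f p J (n + 1)) := by
  rintro y ⟨hy, hyp⟩
  simp only [reachedWithin, mem_iUnion, Finset.mem_range] at hy ⊢
  obtain ⟨i, hi, x, ⟨hxJ, hx⟩, rfl⟩ := hy
  refine ⟨i + 1, by omega, x, ⟨hxJ, fun m hm => ?_⟩, iterate_succ_apply' f i x⟩
  rcases Nat.lt_succ_iff_lt_or_eq.1 hm with hm | rfl
  exacts [hx m hm, hyp]

end Reached

structure IsLorenzExpanding (f f' : ℝ → ℝ) : Prop where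
  hasDerivWithinAt : ∀ x ∈ Icc (-1 : ℝ) 1 \ {0}, HasDerivWithinAt f (f' x) (Icc (-1 : ℝ) 1 \ {0}) x
  mapsTo : MapsTo f (Icc (-1 : ℝ) 1 \ {0}) (Ioo (-1) 1)
  tendsto_nhdsLT : Tendsto f (𝓝[<] 0) (𝓝 1)
  tendsto_nhdsGT : Tendsto f (𝓝[>] 0) (𝓝 (-1))
  sqrt_two_lt_deriv : ∀ x ∈ Icc (-1 : ℝ) 1 \ {0}, √2 < f' x

def EventuallyCovers (f : ℝ → ℝ) (J : Set ℝ) : Prop :=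
  ∃ N, Ioo (-1) 1 ⊆ reachedWithin f 0 J N

/-- `update f 0 (-1)` and `update f 0 1` are the continuous extensions to `0` of the right and
left branches of `f`, so `f` maps an interval `(c, d)` inside one branch onto
`(update f 0 (-1) c, update f 0 1 d)`. -/
def ExpandsWithGain (f : ℝ → ℝ) (δ ε : ℝ) : Prop :=
  ∀ ⦃c d : ℝ⦄, c + δ ≤ d → Ioo c d ⊆ Icc (-1) 1 \ {0} →
    √2 * (d - c) + ε ≤ update f 0 1 d - update f 0 (-1) c

namespace IsLorenzExpanding

variable {f f' : ℝ → ℝ}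

theorem continuousOn (hf : IsLorenzExpanding f f') : ContinuousOn f (Icc (-1) 1 \ {0}) :=
  fun x hx => (hf.hasDerivWithinAt x hx).continuousWithinAt

theorem hasDerivAt (hf : IsLorenzExpanding f f') {x : ℝ} (hx : x ∈ Ioo (-1 : ℝ) 1) (hx0 : x ≠ 0) :
    HasDerivAt f (f' x) x :=
  (hf.hasDerivWithinAt x ⟨Ioo_subset_Icc_self hx, hx0⟩).hasDerivAt
    (inter_mem (Icc_mem_nhds hx.1 hx.2) (compl_singleton_mem_nhds hx0))

theorem update_mem_Icc (hf : IsLorenzExpanding f f') {v x : ℝ} (hv : v ∈ Icc (-1 : ℝ) 1)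
    (hx : x ∈ Icc (-1 : ℝ) 1) : update f 0 v x ∈ Icc (-1 : ℝ) 1 := by
  rcases eq_or_ne x 0 with rfl | hx0
  · simpa using hv
  · rw [update_of_ne hx0]
    exact Ioo_subset_Icc_self (hf.mapsTo ⟨hx, hx0⟩)

theorem Ioo_update_subset_Icc (hf : IsLorenzExpanding f f') {c d : ℝ} (hcd : c < d)
    (hD : Ioo c d ⊆ Icc (-1) 1 \ {0}) :
    Ioo (update f 0 (-1) c) (update f 0 1 d) ⊆ Icc (-1) 1 := by
  obtain ⟨hc, hd, -⟩ := (Ioo_subset_Icc_diff_zero_iff hcd).1 hD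
  exact Ioo_subset_Icc_self.trans <| Icc_subset_Icc
    (hf.update_mem_Icc (by norm_num) ⟨hc, hcd.le.trans hd⟩).1
    (hf.update_mem_Icc (by norm_num) ⟨hc.trans hcd.le, hd⟩).2

theorem continuousOn_update (hf : IsLorenzExpanding f f') {s t v : ℝ} (hs : -1 ≤ s) (ht : t ≤ 1)
    (hv : Tendsto f (𝓝[Icc s t \ {0}] 0) (𝓝 v)) : ContinuousOn (update f 0 v) (Icc s t) :=
  continuousOn_update_iff.2
    ⟨hf.continuousOn.mono (sdiff_subset_sdiff_left (Icc_subset_Icc hs ht)), fun _ => hv⟩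

theorem continuousOn_update_left (hf : IsLorenzExpanding f f') :
    ContinuousOn (update f 0 1) (Icc (-1) 0) :=
  hf.continuousOn_update le_rfl zero_le_one <| hf.tendsto_nhdsLT.mono_left <|
    nhdsWithin_mono _ fun _ hx => lt_of_le_of_ne hx.1.2 hx.2

theorem continuousOn_update_right (hf : IsLorenzExpanding f f') :
    ContinuousOn (update f 0 (-1)) (Icc 0 1) :=
  hf.continuousOn_update (by norm_num) le_rfl <| hf.tendsto_nhdsGT.mono_left <|
    nhdsWithin_mono _ fun _ hx => lt_of_le_of_ne hx.1.1 (Ne.symm hx.2)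

theorem strictMonoOn_update_sub (hf : IsLorenzExpanding f f') {s t v : ℝ} (hs : -1 ≤ s)
    (ht : t ≤ 1) (h0 : (0 : ℝ) ∉ Ioo s t) (hF : ContinuousOn (update f 0 v) (Icc s t)) :
    StrictMonoOn (fun x => update f 0 v x - √2 * x) (Icc s t) := by
  refine strictMonoOn_of_deriv_pos (convex_Icc s t) (hF.sub (by fun_prop)) fun x hx => ?_
  rw [interior_Icc] at hx
  have hx0 : x ≠ 0 := ne_of_mem_of_not_mem hx h0
  have hxD : x ∈ Ioo (-1 : ℝ) 1 := ⟨hs.trans_lt hx.1, hx.2.trans_le ht⟩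
  have hupdate : update f 0 v =ᶠ[𝓝 x] f :=
    (eventually_ne_nhds hx0).mono fun y hy => update_of_ne hy _ _
  have hG : HasDerivAt (fun y => update f 0 v y - √2 * y) (f' x - √2 * 1) x :=
    ((hf.hasDerivAt hxD hx0).congr_of_eventuallyEq hupdate).sub ((hasDerivAt_id' x).const_mul √2)
  rw [hG.deriv, mul_one]
  linarith [hf.sqrt_two_lt_deriv x ⟨Ioo_subset_Icc_self hxD, hx0⟩]

theorem strictMonoOn_update_sub_left (hf : IsLorenzExpanding f f') :
    StrictMonoOn (fun x => update f 0 1 x - √2 * x) (Icc (-1) 0) :=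
  hf.strictMonoOn_update_sub le_rfl zero_le_one (by simp) hf.continuousOn_update_left

theorem strictMonoOn_update_sub_right (hf : IsLorenzExpanding f f') :
    StrictMonoOn (fun x => update f 0 (-1) x - √2 * x) (Icc 0 1) :=
  hf.strictMonoOn_update_sub (by norm_num) le_rfl (by simp) hf.continuousOn_update_right

theorem Ioo_update_subset_image (hf : IsLorenzExpanding f f') {c d : ℝ} (hcd : c < d)
    (hD : Ioo c d ⊆ Icc (-1) 1 \ {0}) :
    Ioo (update f 0 (-1) c) (update f 0 1 d) ⊆ f '' Ioo c d := by
  have h0 : (0 : ℝ) ∉ Ioo c d := fun h => (hD h).2 rfl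
  obtain ⟨hc, hd, hd0 | hc0⟩ := (Ioo_subset_Icc_diff_zero_iff hcd).1 hD
  · have hc0 : c ≠ 0 := (hcd.trans_le hd0).ne
    rw [update_of_ne hc0, ← update_of_ne hc0 1 f]
    exact Ioo_update_subset_image_of_continuousOn hcd.le h0
      (hf.continuousOn_update_left.mono (Icc_subset_Icc hc hd0))
  · have hd0 : d ≠ 0 := (hc0.trans_lt hcd).ne'
    rw [update_of_ne hd0, ← update_of_ne hd0 (-1) f]
    exact Ioo_update_subset_image_of_continuousOn hcd.le h0
      (hf.continuousOn_update_right.mono (Icc_subset_Icc hc0 hd))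

theorem sqrt_two_mul_le (hf : IsLorenzExpanding f f') {c d : ℝ} (hcd : c < d)
    (hD : Ioo c d ⊆ Icc (-1) 1 \ {0}) :
    √2 * (d - c) ≤ update f 0 1 d - update f 0 (-1) c := by
  obtain ⟨hc, hd, hd0 | hc0⟩ := (Ioo_subset_Icc_diff_zero_iff hcd).1 hD
  · have hc0 : c ≠ 0 := (hcd.trans_le hd0).ne
    have := hf.strictMonoOn_update_sub_left.monotoneOn ⟨hc, hcd.le.trans hd0⟩
      ⟨hc.trans hcd.le, hd0⟩ hcd.le
    rw [update_of_ne hc0] at this ⊢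
    linarith
  · have hd0 : d ≠ 0 := (hc0.trans_lt hcd).ne'
    have := hf.strictMonoOn_update_sub_right.monotoneOn ⟨hc0, hcd.le.trans hd⟩
      ⟨hc0.trans hcd.le, hd⟩ hcd.le
    rw [update_of_ne hd0] at this ⊢
    linarith

theorem exists_expandsWithGain (hf : IsLorenzExpanding f f') {δ : ℝ} (hδ : 0 < δ) :
    ∃ ε > 0, ExpandsWithGain f δ ε := by
  obtain ⟨ε₁, hε₁, hleft⟩ := hf.strictMonoOn_update_sub_left.exists_pos_add_le
    (hf.continuousOn_update_left.sub (by fun_prop)) hδ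
  obtain ⟨ε₂, hε₂, hright⟩ := hf.strictMonoOn_update_sub_right.exists_pos_add_le
    (hf.continuousOn_update_right.sub (by fun_prop)) hδ
  refine ⟨min ε₁ ε₂, lt_min hε₁ hε₂, fun c d hcd hD => ?_⟩
  have hcd' : c < d := by linarith
  obtain ⟨hc, hd, hd0 | hc0⟩ := (Ioo_subset_Icc_diff_zero_iff hcd').1 hD
  · have hc0 : c ≠ 0 := (hcd'.trans_le hd0).ne
    have := hleft c ⟨hc, hcd'.le.trans hd0⟩ d ⟨hc.trans hcd'.le, hd0⟩ hcd
    rw [update_of_ne hc0] at this ⊢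
    linarith [min_le_left ε₁ ε₂]
  · have hd0 : d ≠ 0 := (hc0.trans_lt hcd').ne'
    have := hright c ⟨hc0, hcd'.le.trans hd⟩ d ⟨hc0.trans hcd'.le, hd⟩ hcd
    rw [update_of_ne hd0] at this ⊢
    linarith [min_le_right ε₁ ε₂]

variable {J : Set ℝ} {n : ℕ}

theorem Ioo_update_subset_reachedWithin_succ (hf : IsLorenzExpanding f f') {c d : ℝ}
    (hcd : c < d) (hD : Ioo c d ⊆ Icc (-1) 1 \ {0}) (h : Ioo c d ⊆ reachedWithin f 0 J n) :
    Ioo (update f 0 (-1) c) (update f 0 1 d) ⊆ reachedWithin f 0 J (n + 1) :=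
  (hf.Ioo_update_subset_image hcd hD).trans <| MapsTo.image_subset <|
    (mapsTo_reachedWithin f 0 J n).mono_left
      (subset_sdiff.2 ⟨h, disjoint_singleton_right.2 fun h0 => (hD h0).2 rfl⟩)

theorem Ioo_neg_one_one_subset_reachedWithin (hf : IsLorenzExpanding f f') {A B : ℝ}
    (hA : A < 0) (hB : 0 < B) (hAB : A = -1 ∨ B = 1) (h : Ioo A B ⊆ reachedWithin f 0 J n) :
    Ioo (-1) 1 ⊆ reachedWithin f 0 J (n + 1) := by
  have hmono := reachedWithin_mono f 0 J n.le_succ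
  rcases hAB with rfl | rfl
  · have hD : Ioo (-1 : ℝ) 0 ⊆ Icc (-1) 1 \ {0} := (Ioo_subset_Icc_diff_zero_iff hA).2 (by norm_num)
    have himage := hf.Ioo_update_subset_reachedWithin_succ hA hD
      ((Ioo_subset_Ioo_right hB.le).trans h)
    have hlen := hf.sqrt_two_mul_le hA hD
    rw [update_self] at himage hlen
    have : update f 0 (-1) (-1) < B := by linarith [Real.one_lt_sqrt_two]
    exact (Ioo_subset_Ioo_union_Ioo le_rfl this le_rfl).trans (union_subset (h.trans hmono) himage)
  · have hD : Ioo (0 : ℝ) 1 ⊆ Icc (-1) 1 \ {0} := (Ioo_subset_Icc_diff_zero_iff hB).2 (by norm_num)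
    have himage := hf.Ioo_update_subset_reachedWithin_succ hB hD
      ((Ioo_subset_Ioo_left hA.le).trans h)
    have hlen := hf.sqrt_two_mul_le hB hD
    rw [update_self] at himage hlen
    have : A < update f 0 1 1 := by linarith [Real.one_lt_sqrt_two]
    exact (Ioo_subset_Ioo_union_Ioo le_rfl this le_rfl).trans (union_subset himage (h.trans hmono))

theorem eventuallyCovers_or_Ioo_update_subset (hf : IsLorenzExpanding f f') {c d : ℝ}
    (hcd : c < d) (hD : Ioo c d ⊆ Icc (-1) 1 \ {0}) (h0 : c = 0 ∨ d = 0)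
    (h : Ioo c d ⊆ reachedWithin f 0 J n) :
    EventuallyCovers f J ∨
      Ioo (update f 0 (-1) c) (update f 0 1 d) ⊆ Icc (-1) 1 \ {0} := by
  by_cases hmem : (0 : ℝ) ∈ Ioo (update f 0 (-1) c) (update f 0 1 d)
  · refine Or.inl ⟨_, hf.Ioo_neg_one_one_subset_reachedWithin hmem.1 hmem.2 ?_
      (hf.Ioo_update_subset_reachedWithin_succ hcd hD h)⟩
    rcases h0 with rfl | rfl
    exacts [Or.inl (update_self ..), Or.inr (update_self ..)]
  · exact Or.inr (subset_sdiff_singleton (hf.Ioo_update_subset_Icc hcd hD) hmem)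

theorem eventuallyCovers_or_exists_longer (hf : IsLorenzExpanding f f') {δ ε c d : ℝ}
    (hgain : ExpandsWithGain f δ ε) (hε : 0 < ε) (hcd : c < d) (hD : Ioo c d ⊆ Icc (-1) 1 \ {0})
    (hδ : c + δ ≤ d) (h : Ioo c d ⊆ reachedWithin f 0 J n) :
    EventuallyCovers f J ∨
      ∃ c' d', c' < d' ∧ Ioo c' d' ⊆ Icc (-1) 1 \ {0} ∧ Ioo c' d' ⊆ reachedWithin f 0 J (n + 2) ∧
        d - c + ε / 2 ≤ d' - c' := by
  have hgrow := hgain hδ hD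
  have himage := hf.Ioo_update_subset_reachedWithin_succ hcd hD h
  have hsqrt := Real.one_lt_sqrt_two
  have hsq : √2 * √2 = 2 := Real.mul_self_sqrt zero_le_two
  by_cases hmem : (0 : ℝ) ∈ Ioo (update f 0 (-1) c) (update f 0 1 d)
  · -- the new interval has length `≥ √2 (d₁ - c₁) ≥ (√2 (d - c) + ε) / √2 = d - c + ε / √2`
    obtain ⟨c₁, d₁, hcd₁, hend, hsub, hhalf⟩ := exists_zero_endpoint_half hmem
    have hD₁ := hsub.trans (sdiff_subset_sdiff_left (hf.Ioo_update_subset_Icc hcd hD))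
    have h₁ := hsub.trans (sdiff_subset.trans himage)
    rcases hf.eventuallyCovers_or_Ioo_update_subset hcd₁ hD₁ hend h₁ with hcov | hD₂
    · exact Or.inl hcov
    · have hlen := hf.sqrt_two_mul_le hcd₁ hD₁
      exact Or.inr ⟨_, _, by nlinarith, hD₂, hf.Ioo_update_subset_reachedWithin_succ hcd₁ hD₁ h₁,
        by nlinarith⟩
  · exact Or.inr ⟨_, _, by nlinarith, subset_sdiff_singleton (hf.Ioo_update_subset_Icc hcd hD) hmem,
      himage.trans (reachedWithin_mono f 0 J (by omega)), by nlinarith⟩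

theorem eventuallyCovers_of_expandsWithGain (hf : IsLorenzExpanding f f') {δ ε : ℝ}
    (hgain : ExpandsWithGain f δ ε) (hε : 0 < ε) (k : ℕ) {c d : ℝ} (hcd : c < d)
    (hD : Ioo c d ⊆ Icc (-1) 1 \ {0}) (hδ : c + δ ≤ d) (h : Ioo c d ⊆ reachedWithin f 0 J n)
    (hk : 1 < d - c + k * (ε / 2)) : EventuallyCovers f J := by
  induction k generalizing n c d with
  | zero =>
    obtain ⟨hc, hd, hd0 | hc0⟩ := (Ioo_subset_Icc_diff_zero_iff hcd).1 hD <;>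
    · norm_num at hk
      linarith
  | succ k ih =>
    rcases hf.eventuallyCovers_or_exists_longer hgain hε hcd hD hδ h with
      hcov | ⟨c', d', hcd', hD', h', hlen⟩
    · exact hcov
    · exact ih hcd' hD' (by linarith) h' (by push_cast at hk; linarith)

end IsLorenzExpanding

/-- Every Lorenz expanding map is eventually onto: for every open interval
`J ⊆ [-1,1] \ {0}` there is `N > 0` such that the union of the images of the
(partially defined) iterates `f^i`, `0 ≤ i ≤ N`, covers `(-1,1)`. -/
theorem lorenz_eventually_onto
    (f f' : ℝ → ℝ)
    (hderiv : ∀ x ∈ Icc (-1:ℝ) 1 \ {0},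
      HasDerivWithinAt f (f' x) (Icc (-1:ℝ) 1 \ {0}) x)
    (hrange : ∀ x ∈ Icc (-1:ℝ) 1 \ {0}, f x ∈ Ioo (-1:ℝ) 1)
    (hlim_left : Tendsto f (nhdsWithin 0 (Iio 0)) (nhds 1))
    (hlim_right : Tendsto f (nhdsWithin 0 (Ioi 0)) (nhds (-1)))
    (hexp : ∀ x ∈ Icc (-1:ℝ) 1 \ {0}, f' x > Real.sqrt 2)
    (a b : ℝ) (hab : a < b) (hJ : Ioo a b ⊆ Icc (-1:ℝ) 1 \ {0}) :
    ∃ N : ℕ, 0 < N ∧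
      Ioo (-1:ℝ) 1 ⊆
        ⋃ i ∈ Finset.range (N + 1),
          f^[i] '' {x ∈ Ioo a b | ∀ m < i, f^[m] x ≠ 0} := by
  have hf : IsLorenzExpanding f f' := ⟨hderiv, fun x hx => hrange x hx, hlim_left, hlim_right, hexp⟩
  obtain ⟨ε, hε, hgain⟩ := hf.exists_expandsWithGain (sub_pos.2 hab)
  obtain ⟨k, hk⟩ := exists_nat_gt (2 / ε)
  have hk' : 2 < k * ε := (div_lt_iff₀ hε).1 hk
  obtain ⟨N, hN⟩ := hf.eventuallyCovers_of_expandsWithGain hgain hε k hab hJ (by linarith)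
    (subset_reachedWithin_zero f 0 _) (by linarith)
  exact ⟨N + 1, N.succ_pos, hN.trans (reachedWithin_mono f 0 _ N.le_succ)⟩
end

section
/- Let f : [-1,1] \ {0} → (-1,1) be a Lorenz expanding map. Then the set of points x ∈ [-1,1] whose forward orbit hits 0 (i.e. f^n(x) = 0 for some n ≥ 0) is dense in [-1,1]. -/
open Set Filter

/-- For a Lorenz expanding map, the set of points whose forward orbit hits `0`
is dense in `[-1,1]`. -/
theorem lorenz_preimages_of_zero_dense
    (f f' : ℝ → ℝ)
    (hderiv : ∀ x ∈ Icc (-1:ℝ) 1 \ {0},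
      HasDerivWithinAt f (f' x) (Icc (-1:ℝ) 1 \ {0}) x)
    (hrange : ∀ x ∈ Icc (-1:ℝ) 1 \ {0}, f x ∈ Ioo (-1:ℝ) 1)
    (hlim_left : Tendsto f (nhdsWithin 0 (Iio 0)) (nhds 1))
    (hlim_right : Tendsto f (nhdsWithin 0 (Ioi 0)) (nhds (-1)))
    (hexp : ∀ x ∈ Icc (-1:ℝ) 1 \ {0}, f' x > Real.sqrt 2) :
    ∀ y ∈ Icc (-1:ℝ) 1,
      y ∈ closure {x ∈ Icc (-1:ℝ) 1 |
        ∃ n : ℕ, (∀ m < n, f^[m] x ≠ 0) ∧ f^[n] x = 0} := by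
  classical
  set D : Set ℝ := Icc (-1:ℝ) 1 \ {0} with hDdef
  have hone : (1:ℝ) < Real.sqrt 2 := by
    rw [show (1:ℝ) = Real.sqrt 1 from Real.sqrt_one.symm]
    exact Real.sqrt_lt_sqrt zero_le_one one_lt_two
  have hpos : (0:ℝ) < Real.sqrt 2 := lt_trans one_pos hone
  -- key step on an interval avoiding 0
  have step : ∀ A B : ℝ, A ≤ B → Icc A B ⊆ D →
      f '' Icc A B = Icc (f A) (f B) ∧ Icc (f A) (f B) ⊆ Icc (-1:ℝ) 1 ∧
      Real.sqrt 2 * (B - A) ≤ f B - f A := by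
    intro A B hle hsub
    have hAmem : A ∈ Icc A B := left_mem_Icc.mpr hle
    have hBmem : B ∈ Icc A B := right_mem_Icc.mpr hle
    have hcont : ContinuousOn f (Icc A B) := fun x hx =>
      ((hderiv x (hsub hx)).continuousWithinAt).mono hsub
    have hderAt : ∀ x ∈ interior (Icc A B), HasDerivAt f (f' x) x := by
      intro x hx
      rw [interior_Icc] at hx
      have hxD : x ∈ D := hsub ⟨le_of_lt hx.1, le_of_lt hx.2⟩
      have hnb : D ∈ nhds x := by
        refine mem_nhds_iff.mpr ⟨Ioo (-1:ℝ) 1 ∩ {0}ᶜ, ?_, isOpen_Ioo.inter isOpen_compl_singleton, ?_, hxD.2⟩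
        · intro z hz; exact ⟨Ioo_subset_Icc_self hz.1, hz.2⟩
        · have h1 : (-1:ℝ) ≤ A := (hsub hAmem).1.1
          have h2 : B ≤ 1 := (hsub hBmem).1.2
          exact ⟨lt_of_le_of_lt h1 hx.1, lt_of_lt_of_le hx.2 h2⟩
      exact (hderiv x hxD).hasDerivAt hnb
    have hdiff : DifferentiableOn ℝ f (interior (Icc A B)) := fun x hx =>
      (hderAt x hx).differentiableAt.differentiableWithinAt
    have hge : ∀ x ∈ interior (Icc A B), Real.sqrt 2 ≤ deriv f x := by
      intro x hx
      rw [(hderAt x hx).deriv]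
      have hxD : x ∈ D := by
        rw [interior_Icc] at hx
        exact hsub ⟨le_of_lt hx.1, le_of_lt hx.2⟩
      exact le_of_lt (hexp x hxD)
    have hmvt := (convex_Icc A B).mul_sub_le_image_sub_of_le_deriv hcont hdiff hge
    have hmono : ∀ u ∈ Icc A B, ∀ v ∈ Icc A B, u ≤ v → f u ≤ f v := by
      intro u hu v hv huv
      have := hmvt u hu v hv huv
      nlinarith [mul_nonneg hpos.le (sub_nonneg.mpr huv)]
    have himg : f '' Icc A B = Icc (f A) (f B) := by
      apply Subset.antisymm
      · rintro _ ⟨x, hx, rfl⟩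
        exact ⟨hmono A hAmem x hx hx.1, hmono x hx B hBmem hx.2⟩
      · exact intermediate_value_Icc hle hcont
    refine ⟨himg, ?_, hmvt A hAmem B hBmem hle⟩
    intro z hz
    have hfA := hrange A (hsub hAmem)
    have hfB := hrange B (hsub hBmem)
    exact ⟨le_trans hfA.1.le hz.1, le_trans hz.2 hfB.2.le⟩
  -- main argument
  intro y hy
  rw [Metric.mem_closure_iff]
  intro ε hε
  by_cases h0 : |y| < ε
  · refine ⟨0, ⟨⟨by norm_num, by norm_num⟩, 0, ?_, rfl⟩, ?_⟩
    · intro m hm; omega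
    · simpa [Real.dist_eq] using h0
  push_neg at h0
  -- choose a nondegenerate interval [a,b] within ε of y avoiding 0
  have hε1 : ε ≤ 1 := le_trans h0 (abs_le.mpr hy)
  have key : ∀ a b : ℝ, a < b → Icc a b ⊆ D →
      ∃ x ∈ Icc a b, ∃ n : ℕ, f^[n] x = 0 := by
    intro a b hab hsub
    by_contra hcon
    push_neg at hcon
    -- all iterates avoid 0; show growth contradiction
    have claim : ∀ n : ℕ, f^[n] '' Icc a b = Icc (f^[n] a) (f^[n] b) ∧
        Icc (f^[n] a) (f^[n] b) ⊆ Icc (-1:ℝ) 1 ∧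
        Real.sqrt 2 ^ n * (b - a) ≤ f^[n] b - f^[n] a := by
      intro n
      induction n with
      | zero =>
        simp only [Function.iterate_zero, image_id', id_eq, pow_zero, one_mul]
        exact ⟨trivial, fun z hz => (hsub hz).1, le_refl _⟩
      | succ n ih =>
        obtain ⟨himg, hIcc, hlen⟩ := ih
        set A := f^[n] a
        set B := f^[n] b
        have hAB : A ≤ B := by nlinarith [pow_pos hpos n]
        have hsub2 : Icc A B ⊆ D := by
          intro z hz
          refine ⟨hIcc hz, ?_⟩
          rw [← himg] at hz
          obtain ⟨x, hx, rfl⟩ := hz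
          exact hcon x hx n
        obtain ⟨himg2, hIcc2, hlen2⟩ := step A B hAB hsub2
        have hiter : f^[n+1] '' Icc a b = Icc (f^[n+1] a) (f^[n+1] b) := by
          have h1 : f^[n+1] '' Icc a b = f '' (f^[n] '' Icc a b) := by
            rw [Function.iterate_succ', image_comp]
          rw [h1, himg, himg2, Function.iterate_succ_apply', Function.iterate_succ_apply']
        refine ⟨hiter, by rw [Function.iterate_succ_apply', Function.iterate_succ_apply']; exact hIcc2, ?_⟩
        rw [Function.iterate_succ_apply', Function.iterate_succ_apply', pow_succ]
        calc Real.sqrt 2 ^ n * Real.sqrt 2 * (b - a)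
            = Real.sqrt 2 * (Real.sqrt 2 ^ n * (b - a)) := by ring
          _ ≤ Real.sqrt 2 * (B - A) := by
              apply mul_le_mul_of_nonneg_left _ hpos.le
              linarith
          _ ≤ f B - f A := hlen2
    obtain ⟨n, hn⟩ := pow_unbounded_of_one_lt (2 / (b - a)) hone
    obtain ⟨_, hIcc, hlen⟩ := claim n
    have h1 := (hIcc (left_mem_Icc.mpr ((by nlinarith [pow_pos hpos n] : f^[n] a ≤ f^[n] b))))
    have h2 := (hIcc (right_mem_Icc.mpr ((by nlinarith [pow_pos hpos n] : f^[n] a ≤ f^[n] b))))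
    have hba : (0:ℝ) < b - a := sub_pos.mpr hab
    have : (2:ℝ) < Real.sqrt 2 ^ n * (b - a) := by
      rw [div_lt_iff₀ hba] at hn
      linarith
    have : f^[n] b - f^[n] a ≤ 2 := by
      have := h1.1; have := h2.2; linarith
    linarith [claim n |>.2.2]
  -- now pick the interval
  have main : ∃ a b : ℝ, a < b ∧ Icc a b ⊆ D ∧ ∀ x ∈ Icc a b, dist y x < ε := by
    rcases le_or_gt 0 y with hy0 | hy0
    · have hyε : ε ≤ y := by rwa [abs_of_nonneg hy0] at h0
      refine ⟨y - ε / 2, y, by linarith, ?_, ?_⟩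
      · intro z hz
        constructor
        · exact ⟨by linarith [hz.1, hy.1], by linarith [hz.2, hy.2]⟩
        · simp only [mem_singleton_iff]
          intro hz0
          rw [hz0] at hz
          have := hz.1; linarith
      · intro x hx
        rw [Real.dist_eq, abs_lt]
        constructor <;> [linarith [hx.2]; linarith [hx.1]]
    · have hyε : y ≤ -ε := by
        rw [abs_of_neg hy0] at h0; linarith
      refine ⟨y, y + ε / 2, by linarith, ?_, ?_⟩
      · intro z hz
        constructor
        · exact ⟨by linarith [hz.1, hy.1], by linarith [hz.2, hy.2]⟩
        · simp only [mem_singleton_iff]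
          intro hz0
          rw [hz0] at hz
          have := hz.2; linarith
      · intro x hx
        rw [Real.dist_eq, abs_lt]
        constructor <;> [linarith [hx.2]; linarith [hx.1]]
  obtain ⟨a, b, hab, hsubD, hdist⟩ := main
  obtain ⟨x, hx, n, hxn⟩ := key a b hab hsubD
  -- take minimal n
  have hex : ∃ k, f^[k] x = 0 := ⟨n, hxn⟩
  refine ⟨x, ⟨(hsubD hx).1, Nat.find hex, fun m hm => Nat.find_min hex hm, Nat.find_spec hex⟩, hdist x hx⟩
end

section
/- Let f : [-1,1] \ {0} → (-1,1) be a Lorenz expanding map. Then the set of periodic points of f is dense in (-1,1): for every nonempty open interval J ⊆ (-1,1) \ {0} there exist n ≥ 1 and x ∈ J with f^n(x) = x. -/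
open Set Filter Topology

namespace LorenzProof

/-- The data of a Lorenz expanding map, distilled from the differentiability
hypotheses into branch continuity and branch expansion estimates. -/
structure LD where
  f : ℝ → ℝ
  cL : ContinuousOn f (Ico (-1:ℝ) 0)
  cR : ContinuousOn f (Ioc (0:ℝ) 1)
  range : ∀ x ∈ Icc (-1:ℝ) 1 \ {0}, f x ∈ Ioo (-1:ℝ) 1
  liml : Tendsto f (nhdsWithin 0 (Iio 0)) (nhds 1)
  limr : Tendsto f (nhdsWithin 0 (Ioi 0)) (nhds (-1))
  expL : ∀ x ∈ Ico (-1:ℝ) 0, ∀ y ∈ Ico (-1:ℝ) 0, x < y →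
    Real.sqrt 2 * (y - x) < f y - f x
  expR : ∀ x ∈ Ioc (0:ℝ) 1, ∀ y ∈ Ioc (0:ℝ) 1, x < y →
    Real.sqrt 2 * (y - x) < f y - f x

lemma s2_sq : Real.sqrt 2 * Real.sqrt 2 = 2 := Real.mul_self_sqrt (by norm_num)

lemma s2_pos : (0:ℝ) < Real.sqrt 2 := Real.sqrt_pos.2 (by norm_num)

lemma s2_gt1 : (1:ℝ) < Real.sqrt 2 := by nlinarith [s2_sq, s2_pos]

lemma s2_lt : Real.sqrt 2 < 1.4143 := by nlinarith [s2_sq, s2_pos]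

lemma s2_gt : (1.4142:ℝ) < Real.sqrt 2 := by nlinarith [s2_sq, s2_pos]

lemma memS {x : ℝ} (h1 : -1 ≤ x) (h2 : x ≤ 1) (h3 : x ≠ 0) :
    x ∈ Icc (-1:ℝ) 1 \ {0} := ⟨⟨h1, h2⟩, by simpa using h3⟩

namespace LD

variable (L : LD)

lemma rng {x : ℝ} (h1 : -1 ≤ x) (h2 : x ≤ 1) (h3 : x ≠ 0) :
    L.f x ∈ Ioo (-1:ℝ) 1 := L.range x (memS h1 h2 h3)

lemma monoLlt {x y : ℝ} (hx : x ∈ Ico (-1:ℝ) 0) (hy : y ∈ Ico (-1:ℝ) 0)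
    (hxy : x < y) : L.f x < L.f y := by
  have := L.expL x hx y hy hxy
  nlinarith [s2_pos]

lemma monoLle {x y : ℝ} (hx : x ∈ Ico (-1:ℝ) 0) (hy : y ∈ Ico (-1:ℝ) 0)
    (hxy : x ≤ y) : L.f x ≤ L.f y := by
  rcases eq_or_lt_of_le hxy with rfl | h
  · exact le_rfl
  · exact (L.monoLlt hx hy h).le

lemma monoRlt {x y : ℝ} (hx : x ∈ Ioc (0:ℝ) 1) (hy : y ∈ Ioc (0:ℝ) 1)
    (hxy : x < y) : L.f x < L.f y := by
  have := L.expR x hx y hy hxy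
  nlinarith [s2_pos]

lemma monoRle {x y : ℝ} (hx : x ∈ Ioc (0:ℝ) 1) (hy : y ∈ Ioc (0:ℝ) 1)
    (hxy : x ≤ y) : L.f x ≤ L.f y := by
  rcases eq_or_lt_of_le hxy with rfl | h
  · exact le_rfl
  · exact (L.monoRlt hx hy h).le

/-- limit upper bound on the left branch : `f x ≤ 1 + √2 x`. -/
lemma fL_ub {x : ℝ} (hx : x ∈ Ico (-1:ℝ) 0) : L.f x ≤ 1 + Real.sqrt 2 * x := by
  have T : Tendsto (fun y => L.f y - Real.sqrt 2 * (y - x)) (𝓝[<] (0:ℝ))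
      (𝓝 (1 - Real.sqrt 2 * (0 - x))) := by
    exact L.liml.sub (((tendsto_id.mono_left nhdsWithin_le_nhds).sub_const x).const_mul _)
  have ev : ∀ᶠ y in 𝓝[<] (0:ℝ), L.f x ≤ L.f y - Real.sqrt 2 * (y - x) := by
    filter_upwards [eventually_mem_set.2 (Ioo_mem_nhdsLT hx.2)] with y hy
    have := L.expL x hx y ⟨by linarith [hx.1, hy.1], hy.2⟩ hy.1
    linarith
  have := ge_of_tendsto T ev
  nlinarith [this]

/-- limit lower bound on the right branch : `√2 x - 1 ≤ f x`. -/
lemma fR_lb {x : ℝ} (hx : x ∈ Ioc (0:ℝ) 1) : Real.sqrt 2 * x - 1 ≤ L.f x := by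
  have T : Tendsto (fun y => L.f y + Real.sqrt 2 * (x - y)) (𝓝[>] (0:ℝ))
      (𝓝 (-1 + Real.sqrt 2 * (x - 0))) := by
    exact L.limr.add ((((tendsto_const_nhds (x := x)).sub
      (tendsto_id.mono_left nhdsWithin_le_nhds)).const_mul _))
  have ev : ∀ᶠ y in 𝓝[>] (0:ℝ), L.f y + Real.sqrt 2 * (x - y) ≤ L.f x := by
    filter_upwards [eventually_mem_set.2 (Ioo_mem_nhdsGT hx.1)] with y hy
    have := L.expR y ⟨hy.1, by linarith [hy.2, hx.2]⟩ x hx hy.2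
    linarith
  have := le_of_tendsto T ev
  nlinarith [this]

lemma fneg1_lt : L.f (-1) < 1 - Real.sqrt 2 := by
  have h1 := L.expL (-1) ⟨le_refl _, by norm_num⟩ (-(1:ℝ)/2) ⟨by norm_num, by norm_num⟩
    (by norm_num)
  have h2 := L.fL_ub (x := -(1:ℝ)/2) ⟨by norm_num, by norm_num⟩
  nlinarith [h1, h2]

lemma f1_gt : Real.sqrt 2 - 1 < L.f 1 := by
  have h1 := L.expR ((1:ℝ)/2) ⟨by norm_num, by norm_num⟩ 1 ⟨by norm_num, le_refl _⟩
    (by norm_num)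
  have h2 := L.fR_lb (x := (1:ℝ)/2) ⟨by norm_num, by norm_num⟩
  nlinarith [h1, h2]

/-- near `0⁺` the map takes values close to `-1`. -/
lemma near0r (L : LD) {v u : ℝ} (hv : -1 < v) (hu : 0 < u) :
    ∃ e, 0 < e ∧ e < u ∧ L.f e < v := by
  have h := (L.limr.eventually_lt_const hv).and
    (eventually_mem_set.2 (Ioo_mem_nhdsGT hu))
  obtain ⟨e, he1, he2⟩ := h.exists
  exact ⟨e, he2.1, he2.2, he1⟩

/-- near `0⁻` the map takes values close to `1`. -/
lemma near0l (L : LD) {v u : ℝ} (hv : v < 1) (hu : u < 0) :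
    ∃ e, u < e ∧ e < 0 ∧ v < L.f e := by
  have h := (L.liml.eventually_const_lt hv).and
    (eventually_mem_set.2 (Ioo_mem_nhdsLT hu))
  obtain ⟨e, he1, he2⟩ := h.exists
  exact ⟨e, he2.1, he2.2, he1⟩

end LD
end LorenzProof
-- mirror section, to be appended to part1 content
namespace LorenzProof

lemma tendsto_neg_IioIoi : Tendsto (fun x : ℝ => -x) (𝓝[<] (0:ℝ)) (𝓝[>] (0:ℝ)) := by
  rw [nhdsWithin, nhdsWithin]
  refine Filter.Tendsto.inf ?_ ?_
  · simpa using (continuous_neg.tendsto (0:ℝ))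
  · exact tendsto_principal_principal.2 fun x hx => by simpa using hx

lemma tendsto_neg_IoiIio : Tendsto (fun x : ℝ => -x) (𝓝[>] (0:ℝ)) (𝓝[<] (0:ℝ)) := by
  rw [nhdsWithin, nhdsWithin]
  refine Filter.Tendsto.inf ?_ ?_
  · simpa using (continuous_neg.tendsto (0:ℝ))
  · exact tendsto_principal_principal.2 fun x hx => by simpa using hx

namespace LD

def mirror (L : LD) : LD where
  f := fun x => - L.f (-x)
  cL := by
    have hm : MapsTo (fun x : ℝ => -x) (Ico (-1:ℝ) 0) (Ioc (0:ℝ) 1) := by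
      intro x hx
      simp only [mem_Ico, mem_Ioc] at *
      constructor <;> linarith [hx.1, hx.2]
    exact ((L.cR.comp continuous_neg.continuousOn hm).neg)
  cR := by
    have hm : MapsTo (fun x : ℝ => -x) (Ioc (0:ℝ) 1) (Ico (-1:ℝ) 0) := by
      intro x hx
      simp only [mem_Ico, mem_Ioc] at *
      constructor <;> linarith [hx.1, hx.2]
    exact ((L.cL.comp continuous_neg.continuousOn hm).neg)
  range := by
    intro x hx
    have hx' : -x ∈ Icc (-1:ℝ) 1 \ {0} := by
      refine ⟨⟨by linarith [hx.1.2], by linarith [hx.1.1]⟩, ?_⟩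
      have : x ≠ 0 := by simpa using hx.2
      simpa using neg_ne_zero.2 this
    have := L.range (-x) hx'
    simp only [mem_Ioo] at *
    constructor <;> linarith [this.1, this.2]
  liml := by
    have := (L.limr.comp tendsto_neg_IioIoi).neg
    simpa using this
  limr := by
    have := (L.liml.comp tendsto_neg_IoiIio).neg
    simpa using this
  expL := by
    intro x hx y hy hxy
    have hx' : -x ∈ Ioc (0:ℝ) 1 := ⟨by simpa using hx.2, by linarith [hx.1]⟩
    have hy' : -y ∈ Ioc (0:ℝ) 1 := ⟨by simpa using hy.2, by linarith [hy.1]⟩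
    have := L.expR (-y) hy' (-x) hx' (by linarith)
    have harg : -x - -y = y - x := by ring
    rw [harg] at this
    linarith
  expR := by
    intro x hx y hy hxy
    have hx' : -x ∈ Ico (-1:ℝ) 0 := ⟨by linarith [hx.2], by simpa using hx.1⟩
    have hy' : -y ∈ Ico (-1:ℝ) 0 := ⟨by linarith [hy.2], by simpa using hy.1⟩
    have := L.expL (-y) hy' (-x) hx' (by linarith)
    have harg : -x - -y = y - x := by ring
    rw [harg] at this
    linarith

lemma mirror_iter (L : LD) : ∀ (m : ℕ) (x : ℝ), (L.mirror.f)^[m] (-x) = - (L.f^[m] x) := by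
  intro m
  induction m with
  | zero => intro x; simp
  | succ k ih =>
    intro x
    rw [Function.iterate_succ_apply, Function.iterate_succ_apply]
    have h1 : L.mirror.f (-x) = -(L.f x) := by
      show -L.f (-(-x)) = -(L.f x)
      rw [neg_neg]
    rw [h1, ih (L.f x)]

end LD
end LorenzProof
namespace LorenzProof

/-- Full context : the map, the target interval `(a,b)`, the seed interval
`[lo,hi]`, and the dynamically significant constants :
`zR`, `zL` are the zeroes of the two branches, `(qs, ps)` is a period-two
orbit with `qs ∈ (0, zR)`, `ps ∈ (zL, 0)`, `w0` is the preimage of `zL` in the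
right branch, `ch` the preimage of `zR` in the left branch, and `xb` witnesses
that the right branch climbs strictly above `qs`. -/
structure Ctx where
  L : LD
  a : ℝ
  b : ℝ
  lo : ℝ
  hi : ℝ
  zR : ℝ
  zL : ℝ
  qs : ℝ
  ps : ℝ
  w0 : ℝ
  ch : ℝ
  xb : ℝ
  hab : a < b
  hsub : Ioo a b ⊆ Ioo (-1:ℝ) 1 \ {0}
  hlo : a < lo
  hlh : lo < hi
  hhi : hi < b
  hzR : L.f zR = 0
  hzR0 : 0 < zR
  hzR1 : zR < 1
  hzL : L.f zL = 0
  hzL0 : zL < 0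
  hzL1 : -1 < zL
  hqs0 : 0 < qs
  hqs1 : qs < zR
  hps : L.f qs = ps
  hpsq : L.f ps = qs
  hps0 : -1 < ps
  hps1 : ps < 0
  hw0a : 0 < w0
  hw0b : w0 < qs
  hw0 : L.f w0 = zL
  hch1 : ps < ch
  hch2 : ch < 0
  hch : L.f ch = zR
  hxb1 : 0 < xb
  hxb2 : xb < 1
  hxb : qs < L.f xb

namespace Ctx

variable (C : Ctx)

lemma seedsub : Icc C.lo C.hi ⊆ Ioo C.a C.b := fun x hx =>
  ⟨lt_of_lt_of_le C.hlo hx.1, lt_of_le_of_lt hx.2 C.hhi⟩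

lemma seedmem : Icc C.lo C.hi ⊆ Ioo (-1:ℝ) 1 \ {0} := fun x hx => C.hsub (C.seedsub hx)

lemma psIco : C.ps ∈ Ico (-1:ℝ) 0 := ⟨C.hps0.le, C.hps1⟩
lemma zLIco : C.zL ∈ Ico (-1:ℝ) 0 := ⟨C.hzL1.le, C.hzL0⟩
lemma chIco : C.ch ∈ Ico (-1:ℝ) 0 := ⟨by linarith [C.hps0, C.hch1], C.hch2⟩
lemma zRIoc : C.zR ∈ Ioc (0:ℝ) 1 := ⟨C.hzR0, C.hzR1.le⟩
lemma qsIoc : C.qs ∈ Ioc (0:ℝ) 1 := ⟨C.hqs0, (C.hqs1.trans C.hzR1).le⟩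
lemma w0Ioc : C.w0 ∈ Ioc (0:ℝ) 1 := ⟨C.hw0a, by linarith [C.hw0b, C.hqs1, C.hzR1]⟩

lemma zL_lt_ps : C.zL < C.ps := by
  by_contra h
  push_neg at h
  have h1 := C.L.monoLle C.psIco C.zLIco h
  rw [C.hpsq, C.hzL] at h1
  linarith [C.hqs0]

lemma ha1 : -1 ≤ C.a := by
  by_contra h
  push_neg at h
  have hmid : (C.a + C.b)/2 ∈ Ioo C.a C.b := ⟨by linarith [C.hab], by linarith [C.hab]⟩
  have hmid1 := (C.hsub hmid).1.1
  have hmem : (C.a + -1)/2 ∈ Ioo C.a C.b := by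
    constructor
    · linarith
    · linarith
  have := (C.hsub hmem).1.1
  linarith

lemma hb1 : C.b ≤ 1 := by
  by_contra h
  push_neg at h
  have hmid : (C.a + C.b)/2 ∈ Ioo C.a C.b := ⟨by linarith [C.hab], by linarith [C.hab]⟩
  have hmid2 := (C.hsub hmid).1.2
  have hmem : (C.b + 1)/2 ∈ Ioo C.a C.b := by
    constructor
    · linarith
    · linarith
  have := (C.hsub hmem).1.2
  linarith

end Ctx

/-- A chain : an interval inside the seed on which the `n`-th iterate is a
continuous expanding branch, with all earlier iterates avoiding `0`. -/
structure Chain (C : Ctx) (n : ℕ) (c d : ℝ) : Prop where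
  hcd : c < d
  sub : Icc c d ⊆ Icc C.lo C.hi
  mem : ∀ x ∈ Icc c d, ∀ m, m ≤ n → C.L.f^[m] x ∈ Ioo (-1:ℝ) 1
  nz : ∀ x ∈ Icc c d, ∀ m, m < n → C.L.f^[m] x ≠ 0
  expn : ∀ x ∈ Icc c d, ∀ y ∈ Icc c d, x ≤ y →
    Real.sqrt 2 ^ n * (y - x) ≤ C.L.f^[n] y - C.L.f^[n] x
  cont : ContinuousOn (C.L.f^[n]) (Icc c d)

namespace Chain

variable {C : Ctx} {n : ℕ} {c d : ℝ}

lemma cmem (h : Chain C n c d) : c ∈ Icc c d := ⟨le_rfl, h.hcd.le⟩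
lemma dmem (h : Chain C n c d) : d ∈ Icc c d := ⟨h.hcd.le, le_rfl⟩

lemma Pmem (h : Chain C n c d) : C.L.f^[n] c ∈ Ioo (-1:ℝ) 1 := h.mem c h.cmem n le_rfl
lemma Qmem (h : Chain C n c d) : C.L.f^[n] d ∈ Ioo (-1:ℝ) 1 := h.mem d h.dmem n le_rfl

lemma val_mem (h : Chain C n c d) {x : ℝ} (hx : x ∈ Icc c d) :
    C.L.f^[n] x ∈ Icc (C.L.f^[n] c) (C.L.f^[n] d) := by
  constructor
  · have := h.expn c h.cmem x hx hx.1
    nlinarith [pow_nonneg (le_of_lt s2_pos) n, hx.1]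
  · have := h.expn x hx d h.dmem hx.2
    nlinarith [pow_nonneg (le_of_lt s2_pos) n, hx.2]

lemma gap_pos (h : Chain C n c d) : 0 < C.L.f^[n] d - C.L.f^[n] c := by
  have := h.expn c h.cmem d h.dmem h.hcd.le
  nlinarith [pow_pos s2_pos n, h.hcd]

lemma restrict (h : Chain C n c d) {c' d' : ℝ} (hc : c ≤ c') (hcd' : c' < d')
    (hd : d' ≤ d) : Chain C n c' d' := by
  have hss : Icc c' d' ⊆ Icc c d := Icc_subset_Icc hc hd
  exact { hcd := hcd'
          sub := hss.trans h.sub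
          mem := fun x hx => h.mem x (hss hx)
          nz := fun x hx => h.nz x (hss hx)
          expn := fun x hx y hy => h.expn x (hss hx) y (hss hy)
          cont := h.cont.mono hss }

/-- iterate once, provided the current image avoids `0`. -/
lemma step (h : Chain C n c d) (hside : C.L.f^[n] d < 0 ∨ 0 < C.L.f^[n] c) :
    Chain C (n+1) c d := by
  rcases hside with hQ | hP
  · -- image in the left branch
    have hBr : ∀ x ∈ Icc c d, C.L.f^[n] x ∈ Ico (-1:ℝ) 0 := fun x hx =>
      ⟨(h.mem x hx n le_rfl).1.le, lt_of_le_of_lt (h.val_mem hx).2 hQ⟩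
    refine { hcd := h.hcd, sub := h.sub, mem := ?_, nz := ?_, expn := ?_, cont := ?_ }
    · intro x hx m hm
      rcases eq_or_lt_of_le hm with h' | h'
      · subst h'
        rw [Function.iterate_succ_apply']
        exact C.L.range _ (memS (hBr x hx).1 (le_trans (hBr x hx).2.le zero_le_one)
          (ne_of_lt (hBr x hx).2))
      · exact h.mem x hx m (Nat.lt_succ_iff.1 h')
    · intro x hx m hm
      rcases Nat.lt_succ_iff_lt_or_eq.1 hm with h' | h'
      · exact h.nz x hx m h'
      · subst h'
        exact ne_of_lt (hBr x hx).2
    · intro x hx y hy hxy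
      rcases eq_or_lt_of_le hxy with rfl | hlt
      · simp
      · have hX := hBr x hx
        have hY := hBr y hy
        have hexp := h.expn x hx y hy hxy
        have hXY : C.L.f^[n] x < C.L.f^[n] y := by
          nlinarith [pow_pos s2_pos n, hlt]
        have hstrict := C.L.expL _ hX _ hY hXY
        rw [Function.iterate_succ_apply', Function.iterate_succ_apply']
        have h2 : Real.sqrt 2 * (Real.sqrt 2 ^ n * (y - x)) ≤
            Real.sqrt 2 * (C.L.f^[n] y - C.L.f^[n] x) :=
          mul_le_mul_of_nonneg_left hexp s2_pos.le
        calc Real.sqrt 2 ^ (n+1) * (y - x)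
            = Real.sqrt 2 * (Real.sqrt 2 ^ n * (y - x)) := by rw [pow_succ]; ring
          _ ≤ Real.sqrt 2 * (C.L.f^[n] y - C.L.f^[n] x) := h2
          _ ≤ C.L.f (C.L.f^[n] y) - C.L.f (C.L.f^[n] x) := hstrict.le
    · rw [Function.iterate_succ']
      exact C.L.cL.comp h.cont hBr
  · -- image in the right branch
    have hBr : ∀ x ∈ Icc c d, C.L.f^[n] x ∈ Ioc (0:ℝ) 1 := fun x hx =>
      ⟨lt_of_lt_of_le hP (h.val_mem hx).1, (h.mem x hx n le_rfl).2.le⟩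
    refine { hcd := h.hcd, sub := h.sub, mem := ?_, nz := ?_, expn := ?_, cont := ?_ }
    · intro x hx m hm
      rcases eq_or_lt_of_le hm with h' | h'
      · subst h'
        rw [Function.iterate_succ_apply']
        exact C.L.range _ (memS (le_trans (by norm_num) (hBr x hx).1.le)
          (hBr x hx).2 (ne_of_gt (hBr x hx).1))
      · exact h.mem x hx m (Nat.lt_succ_iff.1 h')
    · intro x hx m hm
      rcases Nat.lt_succ_iff_lt_or_eq.1 hm with h' | h'
      · exact h.nz x hx m h'
      · subst h'
        exact ne_of_gt (hBr x hx).1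
    · intro x hx y hy hxy
      rcases eq_or_lt_of_le hxy with rfl | hlt
      · simp
      · have hX := hBr x hx
        have hY := hBr y hy
        have hexp := h.expn x hx y hy hxy
        have hXY : C.L.f^[n] x < C.L.f^[n] y := by
          nlinarith [pow_pos s2_pos n, hlt]
        have hstrict := C.L.expR _ hX _ hY hXY
        rw [Function.iterate_succ_apply', Function.iterate_succ_apply']
        have h2 : Real.sqrt 2 * (Real.sqrt 2 ^ n * (y - x)) ≤
            Real.sqrt 2 * (C.L.f^[n] y - C.L.f^[n] x) :=
          mul_le_mul_of_nonneg_left hexp s2_pos.le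
        calc Real.sqrt 2 ^ (n+1) * (y - x)
            = Real.sqrt 2 * (Real.sqrt 2 ^ n * (y - x)) := by rw [pow_succ]; ring
          _ ≤ Real.sqrt 2 * (C.L.f^[n] y - C.L.f^[n] x) := h2
          _ ≤ C.L.f (C.L.f^[n] y) - C.L.f (C.L.f^[n] x) := hstrict.le
    · rw [Function.iterate_succ']
      exact C.L.cR.comp h.cont hBr

/-- refine to a subinterval with prescribed image endpoints, then iterate once. -/
lemma refine (h : Chain C n c d) {t₁ t₂ : ℝ} (h1 : C.L.f^[n] c ≤ t₁) (h12 : t₁ < t₂)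
    (h2 : t₂ ≤ C.L.f^[n] d) (hside : t₂ < 0 ∨ 0 < t₁) :
    ∃ c' d', c ≤ c' ∧ d' ≤ d ∧ Chain C (n+1) c' d' ∧
      C.L.f^[n+1] c' = C.L.f t₁ ∧ C.L.f^[n+1] d' = C.L.f t₂ := by
  obtain ⟨z₁, hz₁m, hz₁⟩ := intermediate_value_Icc h.hcd.le h.cont
    (mem_Icc.2 ⟨h1, le_trans h12.le h2⟩)
  obtain ⟨z₂, hz₂m, hz₂⟩ := intermediate_value_Icc h.hcd.le h.cont
    (mem_Icc.2 ⟨le_trans h1 h12.le, h2⟩)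
  have hz12 : z₁ < z₂ := by
    by_contra hle
    push_neg at hle
    have := h.expn z₂ hz₂m z₁ hz₁m hle
    rw [hz₁, hz₂] at this
    nlinarith [pow_nonneg (le_of_lt s2_pos) n]
  have hres : Chain C n z₁ z₂ := h.restrict hz₁m.1 hz12 hz₂m.2
  have hside' : C.L.f^[n] z₂ < 0 ∨ 0 < C.L.f^[n] z₁ := by
    rcases hside with hs | hs
    · exact Or.inl (by rw [hz₂]; exact hs)
    · exact Or.inr (by rw [hz₁]; exact hs)
  refine ⟨z₁, z₂, hz₁m.1, hz₂m.2, hres.step hside', ?_, ?_⟩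
  · rw [Function.iterate_succ_apply', hz₁]
  · rw [Function.iterate_succ_apply', hz₂]

/-- expansion of a chain whose image avoids 0, until the image straddles 0. -/
lemma grow : ∀ (k n : ℕ) (c d : ℝ), Chain C n c d →
    2 ≤ Real.sqrt 2 ^ k * (C.L.f^[n] d - C.L.f^[n] c) →
    ∃ n', Chain C n' c d ∧ C.L.f^[n'] c ≤ 0 ∧ 0 ≤ C.L.f^[n'] d ∧
      C.L.f^[n] d - C.L.f^[n] c ≤ C.L.f^[n'] d - C.L.f^[n'] c := by
  intro k
  induction k with
  | zero =>
    intro n c d h hk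
    exfalso
    have h1 := h.Pmem
    have h2 := h.Qmem
    simp only [pow_zero, one_mul] at hk
    linarith [h1.1, h2.2]
  | succ k ih =>
    intro n c d h hk
    by_cases h0 : C.L.f^[n] c ≤ 0 ∧ 0 ≤ C.L.f^[n] d
    · exact ⟨n, h, h0.1, h0.2, le_rfl⟩
    · have hside : C.L.f^[n] d < 0 ∨ 0 < C.L.f^[n] c := by
        rcases le_or_gt (C.L.f^[n] c) 0 with h1 | h1
        · rcases le_or_gt 0 (C.L.f^[n] d) with h2 | h2
          · exact absurd ⟨h1, h2⟩ h0
          · exact Or.inl h2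
        · exact Or.inr h1
      have hstep := h.step hside
      have hgrow : Real.sqrt 2 * (C.L.f^[n] d - C.L.f^[n] c) ≤
          C.L.f^[n+1] d - C.L.f^[n+1] c := by
        rw [Function.iterate_succ_apply', Function.iterate_succ_apply']
        rcases hside with hs | hs
        · have hPQ : C.L.f^[n] c < C.L.f^[n] d := by linarith [h.gap_pos]
          exact (C.L.expL _ ⟨h.Pmem.1.le, lt_of_le_of_lt hPQ.le hs⟩
            _ ⟨h.Qmem.1.le, hs⟩ hPQ).le
        · have hPQ : C.L.f^[n] c < C.L.f^[n] d := by linarith [h.gap_pos]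
          exact (C.L.expR _ ⟨hs, h.Pmem.2.le⟩
            _ ⟨lt_of_lt_of_le hs hPQ.le, h.Qmem.2.le⟩ hPQ).le
      have hk' : 2 ≤ Real.sqrt 2 ^ k * (C.L.f^[n+1] d - C.L.f^[n+1] c) := by
        have e1 : Real.sqrt 2 ^ (k+1) * (C.L.f^[n] d - C.L.f^[n] c)
            = Real.sqrt 2 ^ k * (Real.sqrt 2 * (C.L.f^[n] d - C.L.f^[n] c)) := by
          rw [pow_succ]; ring
        have e2 := mul_le_mul_of_nonneg_left hgrow (pow_nonneg s2_pos.le k)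
        linarith [hk, e1 ▸ hk]
      obtain ⟨n', h', hp, hq, hgap⟩ := ih (n+1) c d hstep hk'
      refine ⟨n', h', hp, hq, le_trans ?_ hgap⟩
      nlinarith [h.gap_pos, s2_gt1]

end Chain

end LorenzProof
namespace LorenzProof

/-- the goal : a periodic point inside the target interval. -/
def Final (C : Ctx) : Prop :=
  ∃ n, 1 ≤ n ∧ ∃ x ∈ Ioo C.a C.b, (∀ m, m < n → C.L.f^[m] x ≠ 0) ∧ C.L.f^[n] x = x

lemma final_of_cover {C : Ctx} {n c d} (h : Chain C n c d) (hn : 1 ≤ n)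
    (h1 : C.L.f^[n] c ≤ (C.a + C.lo)/2) (h2 : (C.hi + C.b)/2 ≤ C.L.f^[n] d) :
    Final C := by
  have hT : (C.a + C.lo)/2 < (C.hi + C.b)/2 := by linarith [C.hlo, C.hlh, C.hhi]
  obtain ⟨z₁, hz₁m, hz₁⟩ := intermediate_value_Icc h.hcd.le h.cont
    (mem_Icc.2 ⟨h1, le_trans hT.le h2⟩)
  obtain ⟨z₂, hz₂m, hz₂⟩ := intermediate_value_Icc h.hcd.le h.cont
    (mem_Icc.2 ⟨le_trans h1 hT.le, h2⟩)
  have hz12 : z₁ ≤ z₂ := by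
    by_contra hle
    push_neg at hle
    have := h.expn z₂ hz₂m z₁ hz₁m hle.le
    rw [hz₁, hz₂] at this
    nlinarith [pow_nonneg s2_pos.le n]
  have hzlo : C.lo ≤ z₁ := (h.sub hz₁m).1
  have hzhi : z₂ ≤ C.hi := (h.sub hz₂m).2
  have gcont : ContinuousOn (fun x => C.L.f^[n] x - x) (Icc z₁ z₂) :=
    (h.cont.mono (Icc_subset_Icc hz₁m.1 hz₂m.2)).sub continuousOn_id
  have h0mem : (0:ℝ) ∈ Icc (C.L.f^[n] z₁ - z₁) (C.L.f^[n] z₂ - z₂) := by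
    rw [hz₁, hz₂]
    constructor
    · linarith [C.hlo]
    · linarith [C.hhi]
  obtain ⟨x₀, hx₀m, hx₀⟩ := intermediate_value_Icc hz12 gcont h0mem
  have hx₀' : C.L.f^[n] x₀ = x₀ := by
    have h5 : C.L.f^[n] x₀ - x₀ = 0 := hx₀
    linarith
  have hxcd : x₀ ∈ Icc c d := ⟨le_trans hz₁m.1 hx₀m.1, le_trans hx₀m.2 hz₂m.2⟩
  exact ⟨n, hn, x₀, C.seedsub (h.sub hxcd), fun m hm => h.nz x₀ hxcd m hm, hx₀'⟩

/-- a chain whose image stretches from `≤ 0` up beyond `zR` yields a periodic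
point : split near 0, push the left end to `-1` and then sweep the whole
target interval. -/
lemma final_Q {C : Ctx} {n c d} (h : Chain C n c d) (hP : C.L.f^[n] c ≤ 0)
    (hQ : C.zR ≤ C.L.f^[n] d) : Final C := by
  have ha' : -1 < (C.a + C.lo)/2 := by linarith [C.ha1, C.hlo]
  by_cases hb : C.b ≤ 0
  · obtain ⟨e, he0, he1, he2⟩ := C.L.near0r (v := (C.a + C.lo)/2) (u := C.zR) ha' C.hzR0
    obtain ⟨c', d', _, _, h', hv1, hv2⟩ := h.refine (t₁ := e) (t₂ := C.zR)
      (le_trans hP he0.le) he1 hQ (Or.inr he0)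
    apply final_of_cover h' (by omega)
    · rw [hv1]; exact he2.le
    · rw [hv2, C.hzR]; linarith [C.hhi]
  · push_neg at hb
    have ha0 : 0 ≤ C.a := by
      by_contra hlt
      push_neg at hlt
      exact (C.hsub ⟨hlt, hb⟩).2 rfl
    have hb'1 : (C.hi + C.b)/2 < 1 := by linarith [C.hb1, C.hhi]
    obtain ⟨u, hu1, hu2, hu3⟩ := C.L.near0l (v := (C.hi + C.b)/2) (u := -(1:ℝ)/2)
      hb'1 (by norm_num)
    obtain ⟨x₁, hx11, hx12, hx13⟩ := C.L.near0r (v := u) (u := C.zR) (by linarith) C.hzR0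
    have hcont' : ContinuousOn C.L.f (Icc x₁ C.zR) :=
      C.L.cR.mono (fun y hy => ⟨lt_of_lt_of_le hx11 hy.1, le_trans hy.2 C.hzR1.le⟩)
    obtain ⟨Q', hQ'm, hQ'⟩ := intermediate_value_Icc hx12.le hcont'
      (mem_Icc.2 ⟨hx13.le, by rw [C.hzR]; exact hu2.le⟩)
    obtain ⟨e, he0, he1, he2⟩ := C.L.near0r (v := -1 + 1/10) (u := x₁) (by norm_num) hx11
    obtain ⟨c', d', _, _, h', hv1, hv2⟩ := h.refine (t₁ := e) (t₂ := Q')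
      (le_trans hP he0.le) (lt_of_lt_of_le he1 hQ'm.1) (le_trans hQ'm.2 hQ) (Or.inr he0)
    have hQ'u : C.L.f^[n+1] d' = u := by rw [hv2, hQ']
    have hstep := h'.step (Or.inl (by rw [hQ'u]; exact hu2))
    apply final_of_cover hstep (by omega)
    · rw [Function.iterate_succ_apply', hv1]
      have hfe : C.L.f e ∈ Ico (-1:ℝ) 0 := by
        have hr := C.L.rng (x := e) (by linarith) (by linarith [C.hzR1]) (ne_of_gt he0)
        exact ⟨hr.1.le, by linarith [he2]⟩
      have hub := C.L.fL_ub hfe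
      have h2 : Real.sqrt 2 * C.L.f e ≤ Real.sqrt 2 * (-1 + 1/10) :=
        mul_le_mul_of_nonneg_left he2.le s2_pos.le
      nlinarith [s2_gt, ha0, C.hlo]
    · rw [Function.iterate_succ_apply', hQ'u]
      exact hu3.le

/-- escape along the expanding period-two orbit : a chain whose image reaches
strictly above `qs` eventually reaches above `zR`. -/
lemma escAux {C : Ctx} : ∀ (k n : ℕ) (c d : ℝ), Chain C n c d → C.L.f^[n] c ≤ 0 →
    C.qs < C.L.f^[n] d → C.zR - C.qs ≤ 2^k * (C.L.f^[n] d - C.qs) → Final C := by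
  intro k
  induction k with
  | zero =>
    intro n c d h hP hQ hk
    simp only [pow_zero, one_mul] at hk
    exact final_Q h hP (by linarith)
  | succ k ih =>
    intro n c d h hP hQ hk
    rcases le_or_gt C.zR (C.L.f^[n] d) with hge | hlt
    · exact final_Q h hP hge
    · have hQ1 : C.L.f^[n] d ≤ 1 := h.Qmem.2.le
      have hQm : C.L.f^[n] d ∈ Ioc (0:ℝ) 1 := ⟨lt_trans C.hqs0 hQ, hQ1⟩
      obtain ⟨e, he0, he1, he2⟩ := C.L.near0r (v := -1 + 1/1000) (u := C.L.f^[n] d)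
        (by norm_num) (lt_trans C.hqs0 hQ)
      obtain ⟨c', d', _, _, h', hv1, hv2⟩ := h.refine (t₁ := e) (t₂ := C.L.f^[n] d)
        (le_trans hP he0.le) he1 le_rfl (Or.inr he0)
      have hfQ : C.L.f (C.L.f^[n] d) < 0 := by
        have := C.L.monoRlt hQm C.zRIoc hlt
        rwa [C.hzR] at this
      have hstep := h'.step (Or.inl (by rw [hv2]; exact hfQ))
      have hc2 : C.L.f^[n+1+1] c' = C.L.f (C.L.f e) := by
        rw [Function.iterate_succ_apply', hv1]
      have hd2 : C.L.f^[n+1+1] d' = C.L.f (C.L.f (C.L.f^[n] d)) := by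
        rw [Function.iterate_succ_apply', hv2]
      have hfe : C.L.f e ∈ Ico (-1:ℝ) 0 := by
        have hr := C.L.rng (x := e) (by linarith) (by linarith) (ne_of_gt he0)
        exact ⟨hr.1.le, by linarith⟩
      have hP2 : C.L.f (C.L.f e) ≤ 0 := by
        have hub := C.L.fL_ub hfe
        have h2 : Real.sqrt 2 * C.L.f e ≤ Real.sqrt 2 * (-1 + 1/1000) :=
          mul_le_mul_of_nonneg_left he2.le s2_pos.le
        nlinarith [s2_gt]
      have hd1 : Real.sqrt 2 * (C.L.f^[n] d - C.qs) ≤ C.L.f (C.L.f^[n] d) - C.ps := by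
        have hh := C.L.expR C.qs C.qsIoc _ hQm hQ
        rw [C.hps] at hh
        linarith
      have hfQm : C.L.f (C.L.f^[n] d) ∈ Ico (-1:ℝ) 0 := by
        have hr := C.L.rng (x := C.L.f^[n] d) (by linarith [hQm.1]) hQ1 (ne_of_gt hQm.1)
        exact ⟨hr.1.le, hfQ⟩
      have hpsfQ : C.ps < C.L.f (C.L.f^[n] d) := by
        have := C.L.monoRlt C.qsIoc hQm hQ
        rwa [C.hps] at this
      have hd2' : Real.sqrt 2 * (C.L.f (C.L.f^[n] d) - C.ps) ≤
          C.L.f (C.L.f (C.L.f^[n] d)) - C.qs := by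
        have hh := C.L.expL C.ps C.psIco _ hfQm hpsfQ
        rw [C.hpsq] at hh
        linarith
      have hdesc : 2 * (C.L.f^[n] d - C.qs) ≤ C.L.f (C.L.f (C.L.f^[n] d)) - C.qs := by
        have h3 : Real.sqrt 2 * (Real.sqrt 2 * (C.L.f^[n] d - C.qs)) ≤
            Real.sqrt 2 * (C.L.f (C.L.f^[n] d) - C.ps) :=
          mul_le_mul_of_nonneg_left hd1 s2_pos.le
        nlinarith [s2_sq]
      apply ih (n+1+1) c' d' hstep (by rw [hc2]; exact hP2)
      · rw [hd2]; nlinarith [hQ]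
      · rw [hd2]
        have e1 : (2:ℝ)^(k+1) * (C.L.f^[n] d - C.qs) = 2^k * (2*(C.L.f^[n] d - C.qs)) := by
          rw [pow_succ]; ring
        have e2 := mul_le_mul_of_nonneg_left hdesc
          (pow_nonneg (by norm_num : (0:ℝ) ≤ 2) k)
        linarith [e1 ▸ hk]

lemma esc {C : Ctx} {n c d} (h : Chain C n c d) (hP : C.L.f^[n] c ≤ 0)
    (hQ : C.qs < C.L.f^[n] d) : Final C := by
  obtain ⟨k, hk⟩ := pow_unbounded_of_one_lt ((C.zR - C.qs)/(C.L.f^[n] d - C.qs))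
    (by norm_num : (1:ℝ) < 2)
  apply escAux k n c d h hP hQ
  rw [div_lt_iff₀ (by linarith : (0:ℝ) < C.L.f^[n] d - C.qs)] at hk
  nlinarith

lemma g2a {C : Ctx} {n c d} (h : Chain C n c d) (hQ0 : 0 ≤ C.L.f^[n] d)
    (hPz : C.L.f^[n] c ≤ C.zL) : Final C := by
  have hPlt : C.L.f^[n] c < 0 := lt_of_le_of_lt hPz C.hzL0
  obtain ⟨u, hu1, hu2, hu3⟩ := C.L.near0l (v := C.zR) (u := C.L.f^[n] c) C.hzR1 hPlt
  obtain ⟨c', d', _, _, h', hv1, hv2⟩ := h.refine (t₁ := C.L.f^[n] c) (t₂ := u)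
    le_rfl hu1 (by linarith) (Or.inl hu2)
  apply final_Q h'
  · rw [hv1]
    have hPm : C.L.f^[n] c ∈ Ico (-1:ℝ) 0 := ⟨h.Pmem.1.le, hPlt⟩
    have hh := C.L.monoLle hPm C.zLIco hPz
    rw [C.hzL] at hh
    exact hh
  · rw [hv2]; exact hu3.le

lemma g23 {C : Ctx} {n c d} (h : Chain C n c d) (hQ0 : 0 ≤ C.L.f^[n] d)
    (hPz : C.zL < C.L.f^[n] c) (hPc : C.L.f^[n] c ≤ C.ch) : Final C := by
  have hPlt : C.L.f^[n] c < 0 := lt_of_le_of_lt hPc C.hch2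
  obtain ⟨u, hu1, hu2, hu3⟩ := C.L.near0l (v := C.xb) (u := C.L.f^[n] c) C.hxb2 hPlt
  obtain ⟨c', d', _, _, h', hv1, hv2⟩ := h.refine (t₁ := C.L.f^[n] c) (t₂ := u)
    le_rfl hu1 (by linarith) (Or.inl hu2)
  have hPm : C.L.f^[n] c ∈ Ico (-1:ℝ) 0 := ⟨h.Pmem.1.le, hPlt⟩
  have hfP0 : 0 < C.L.f (C.L.f^[n] c) := by
    have := C.L.monoLlt C.zLIco hPm hPz
    rwa [C.hzL] at this
  have hstep := h'.step (Or.inr (by rw [hv1]; exact hfP0))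
  apply esc hstep
  · rw [Function.iterate_succ_apply', hv1]
    have hfPz : C.L.f (C.L.f^[n] c) ≤ C.zR := by
      have := C.L.monoLle hPm C.chIco hPc
      rwa [C.hch] at this
    have hfPm : C.L.f (C.L.f^[n] c) ∈ Ioc (0:ℝ) 1 := ⟨hfP0, hfPz.trans C.hzR1.le⟩
    have := C.L.monoRle hfPm C.zRIoc hfPz
    rwa [C.hzR] at this
  · rw [Function.iterate_succ_apply', hv2]
    have humem : C.L.f u ∈ Ioc (0:ℝ) 1 := by
      have hr := C.L.rng (x := u) (by linarith [h.Pmem.1]) (by linarith) (ne_of_lt hu2)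
      exact ⟨lt_trans C.hxb1 hu3, hr.2.le⟩
    have := C.L.monoRlt ⟨C.hxb1, C.hxb2.le⟩ humem hu3
    exact lt_trans C.hxb this

lemma finish_big {C : Ctx} {n c d} (h : Chain C n c d) (hP : C.L.f^[n] c ≤ 0)
    (hQ0 : 0 ≤ C.L.f^[n] d) (hgap : C.qs - C.ch < C.L.f^[n] d - C.L.f^[n] c) :
    Final C := by
  rcases lt_or_ge C.qs (C.L.f^[n] d) with h1 | h1
  · exact esc h hP h1
  · have hPch : C.L.f^[n] c < C.ch := by linarith
    rcases le_or_gt (C.L.f^[n] c) C.zL with h2 | h2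
    · exact g2a h hQ0 h2
    · exact g23 h hQ0 h2 hPch.le

end LorenzProof
namespace LorenzProof

set_option maxHeartbeats 1600000 in
/-- the middle case `P ∈ (ch, 0]`, `Q ∈ [w0, qs]`. -/
lemma g4a {C : Ctx} {n c d} (h : Chain C n c d) (hP0 : C.L.f^[n] c ≤ 0)
    (hch : C.ch < C.L.f^[n] c) (hw : C.w0 ≤ C.L.f^[n] d) (hqs : C.L.f^[n] d ≤ C.qs) :
    Final C := by
  have hQ0 : 0 < C.L.f^[n] d := lt_of_lt_of_le C.hw0a hw
  have hQm : C.L.f^[n] d ∈ Ioc (0:ℝ) 1 := ⟨hQ0, h.Qmem.2.le⟩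
  obtain ⟨e, he0, he1, he2⟩ := C.L.near0r (v := -1 + 1/1000) (u := C.L.f^[n] d)
    (by norm_num) hQ0
  obtain ⟨c', d', _, _, h', hv1, hv2⟩ := h.refine (t₁ := e) (t₂ := C.L.f^[n] d)
    (le_trans hP0 he0.le) he1 le_rfl (Or.inr he0)
  have hfQ1 : C.L.f (C.L.f^[n] d) ≤ C.ps := by
    have := C.L.monoRle hQm C.qsIoc hqs; rwa [C.hps] at this
  have hfQ2 : C.zL ≤ C.L.f (C.L.f^[n] d) := by
    have := C.L.monoRle C.w0Ioc hQm hw; rwa [C.hw0] at this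
  have hstep := h'.step (Or.inl (by rw [hv2]; linarith [C.hps1]))
  have hc2 : C.L.f^[n+1+1] c' = C.L.f (C.L.f e) := by
    rw [Function.iterate_succ_apply', hv1]
  have hd2 : C.L.f^[n+1+1] d' = C.L.f (C.L.f (C.L.f^[n] d)) := by
    rw [Function.iterate_succ_apply', hv2]
  have hfe : C.L.f e ∈ Ico (-1:ℝ) 0 := by
    have hr := C.L.rng (x := e) (by linarith) (by linarith [hQm.2]) (ne_of_gt he0)
    exact ⟨hr.1.le, by linarith⟩
  have hP2ub : C.L.f (C.L.f e) ≤ 1 - Real.sqrt 2 + Real.sqrt 2/1000 := by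
    have hub := C.L.fL_ub hfe
    have h2 : Real.sqrt 2 * C.L.f e ≤ Real.sqrt 2 * (-1 + 1/1000) :=
      mul_le_mul_of_nonneg_left he2.le s2_pos.le
    nlinarith
  have hP2neg : C.L.f (C.L.f e) < 0 := by linarith [s2_gt, hP2ub]
  have hQ2pos : 0 ≤ C.L.f (C.L.f (C.L.f^[n] d)) := by
    have hfQm : C.L.f (C.L.f^[n] d) ∈ Ico (-1:ℝ) 0 :=
      ⟨by linarith [C.hzL1], by linarith [C.hps1]⟩
    have := C.L.monoLle C.zLIco hfQm hfQ2
    rwa [C.hzL] at this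
  rcases le_or_gt (C.L.f (C.L.f e)) C.ch with hcase | hcase
  · rcases le_or_gt (C.L.f (C.L.f e)) C.zL with h2 | h2
    · exact g2a hstep (by rw [hd2]; exact hQ2pos) (by rw [hc2]; exact h2)
    · exact g23 hstep (by rw [hd2]; exact hQ2pos) (by rw [hc2]; exact h2)
        (by rw [hc2]; exact hcase)
  · -- M-route
    have hP2m : C.L.f (C.L.f e) ∈ Ico (-1:ℝ) 0 := ⟨by linarith [C.chIco.1], hP2neg⟩
    have hzRb : C.zR < Real.sqrt 2 - 1 + 2/1000 := by
      have h3 := C.L.fL_ub C.chIco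
      rw [C.hch] at h3
      have h4 : Real.sqrt 2 * C.ch < Real.sqrt 2 * (C.L.f (C.L.f e)) :=
        (mul_lt_mul_iff_right₀ s2_pos).2 hcase
      have h5 : Real.sqrt 2 * (C.L.f (C.L.f e)) ≤
          Real.sqrt 2 * (1 - Real.sqrt 2 + Real.sqrt 2/1000) :=
        mul_le_mul_of_nonneg_left hP2ub s2_pos.le
      have h7 : Real.sqrt 2 * (1 - Real.sqrt 2 + Real.sqrt 2/1000)
          = Real.sqrt 2 - 2 + 2/1000 := by
        linear_combination (-(999:ℝ)/1000) * s2_sq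
      linarith [h3, h4, h5, h7]
    have hfP2 : C.zR < C.L.f (C.L.f (C.L.f e)) := by
      have := C.L.monoLlt C.chIco hP2m hcase
      rwa [C.hch] at this
    set P2 := C.L.f (C.L.f e) with hP2def
    set ee := min (-P2/2) (1/1000 : ℝ) with heedef
    have heemin : ee ≤ -P2/2 := min_le_left _ _
    have hee0 : 0 < ee := lt_min (by linarith [hP2neg]) (by norm_num)
    have heeP : P2 < -ee := by linarith
    have hee1 : ee ≤ 1/1000 := min_le_right _ _
    obtain ⟨c'', d'', _, _, h'', hw1, hw2⟩ := hstep.refine (t₁ := P2) (t₂ := -ee)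
      (le_of_eq hc2) heeP (by rw [hd2]; linarith [hQ2pos, hee0]) (Or.inl (by linarith))
    have hmee : -ee ∈ Ico (-1:ℝ) 0 := ⟨by linarith [hP2m.1], by linarith⟩
    have hfP2m : C.L.f P2 ∈ Ioc (0:ℝ) 1 := by
      have hr := C.L.rng (x := P2) hP2m.1 (by linarith [hP2m.2]) (ne_of_lt hP2neg)
      exact ⟨lt_trans C.hzR0 hfP2, hr.2.le⟩
    have hord1 : C.L.f P2 < C.L.f (-ee) := C.L.monoLlt hP2m hmee heeP
    have hfee : C.L.f (-ee) ∈ Ioc (0:ℝ) 1 := by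
      have hr := C.L.rng (x := -ee) hmee.1 (by linarith [hmee.2]) (ne_of_lt hmee.2)
      exact ⟨lt_trans hfP2m.1 hord1, hr.2.le⟩
    have hstep2 := h''.step (Or.inr (by rw [hw1]; exact hfP2m.1))
    have hc3 : C.L.f^[n+1+1+1+1] c'' = C.L.f (C.L.f P2) := by
      rw [Function.iterate_succ_apply', hw1]
    have hd3 : C.L.f^[n+1+1+1+1] d'' = C.L.f (C.L.f (-ee)) := by
      rw [Function.iterate_succ_apply', hw2]
    have hm1pos : 0 < C.L.f (C.L.f P2) := by
      have := C.L.monoRlt C.zRIoc hfP2m hfP2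
      rwa [C.hzR] at this
    have hlen2 : 2 * (-ee - P2) ≤ C.L.f (C.L.f (-ee)) - C.L.f (C.L.f P2) := by
      have e1 := (C.L.expL P2 hP2m (-ee) hmee heeP).le
      have e2 := (C.L.expR _ hfP2m _ hfee hord1).le
      have e3 : Real.sqrt 2 * (Real.sqrt 2 * (-ee - P2)) ≤
          Real.sqrt 2 * (C.L.f (-ee) - C.L.f P2) := mul_le_mul_of_nonneg_left e1 s2_pos.le
      have e4 : Real.sqrt 2 * Real.sqrt 2 * (-ee - P2) ≤
          C.L.f (C.L.f (-ee)) - C.L.f (C.L.f P2) := by linarith [e2, e3]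
      rw [s2_sq] at e4
      exact e4
    have hord2 : C.L.f (C.L.f P2) < C.L.f (C.L.f (-ee)) := by
      have : 0 < -ee - P2 := by linarith
      linarith [hlen2]
    have hm1m : C.L.f (C.L.f P2) ∈ Ioc (0:ℝ) 1 := by
      have hr := C.L.rng (x := C.L.f P2) (by linarith [hfP2m.1]) hfP2m.2 (ne_of_gt hfP2m.1)
      exact ⟨hm1pos, hr.2.le⟩
    have hm2m : C.L.f (C.L.f (-ee)) ∈ Ioc (0:ℝ) 1 := by
      have hr := C.L.rng (x := C.L.f (-ee)) (by linarith [hfee.1]) hfee.2 (ne_of_gt hfee.1)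
      exact ⟨lt_trans hm1pos hord2, hr.2.le⟩
    have hstep3 := hstep2.step (Or.inr (by rw [hc3]; exact hm1pos))
    have hc4 : C.L.f^[n+1+1+1+1+1] c'' = C.L.f (C.L.f (C.L.f P2)) := by
      rw [Function.iterate_succ_apply', hc3]
    have hd4 : C.L.f^[n+1+1+1+1+1] d'' = C.L.f (C.L.f (C.L.f (-ee))) := by
      rw [Function.iterate_succ_apply', hd3]
    have hlen3 : Real.sqrt 2 * (C.L.f (C.L.f (-ee)) - C.L.f (C.L.f P2)) ≤
        C.L.f (C.L.f (C.L.f (-ee))) - C.L.f (C.L.f (C.L.f P2)) :=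
      (C.L.expR _ hm1m _ hm2m hord2).le
    have hl5pos : 0 < C.L.f^[n+1+1+1+1+1] d'' - C.L.f^[n+1+1+1+1+1] c'' := hstep3.gap_pos
    obtain ⟨k, hk⟩ := pow_unbounded_of_one_lt
      (2 / (C.L.f^[n+1+1+1+1+1] d'' - C.L.f^[n+1+1+1+1+1] c'')) s2_gt1
    have hkk : 2 ≤ Real.sqrt 2 ^ k *
        (C.L.f^[n+1+1+1+1+1] d'' - C.L.f^[n+1+1+1+1+1] c'') := by
      rw [div_lt_iff₀ hl5pos] at hk
      linarith
    obtain ⟨N, hN, hNp, hNq, hNgap⟩ := Chain.grow k (n+1+1+1+1+1) c'' d'' hstep3 hkk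
    apply finish_big hN hNp hNq
    rw [hc4, hd4] at hNgap
    have hchub : Real.sqrt 2 * (-C.ch) ≤ 1 - C.zR := by
      have h3 := C.L.fL_ub C.chIco
      rw [C.hch] at h3
      nlinarith
    have hchub2 : -(2:ℝ) * C.ch ≤ (1 - C.zR) * Real.sqrt 2 := by
      have h9 := mul_le_mul_of_nonneg_right hchub s2_pos.le
      have h8 : Real.sqrt 2 * -C.ch * Real.sqrt 2 = -2 * C.ch := by
        linear_combination (-C.ch) * s2_sq
      linarith [h8 ▸ h9]
    have honeminus : (1 - C.zR) * Real.sqrt 2 ≤ Real.sqrt 2 := by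
      nlinarith [C.hzR0, s2_pos, mul_pos C.hzR0 s2_pos]
    have hmlen : 2*(Real.sqrt 2 - 1 - Real.sqrt 2/1000 - 1/1000) ≤
        C.L.f (C.L.f (-ee)) - C.L.f (C.L.f P2) := by
      have hx : Real.sqrt 2 - 1 - Real.sqrt 2/1000 - 1/1000 ≤ -ee - P2 := by
        linarith [hP2ub, hee1]
      linarith [hlen2, hx]
    have hglow : Real.sqrt 2 * (2*(Real.sqrt 2 - 1 - Real.sqrt 2/1000 - 1/1000)) ≤
        C.L.f^[N] d'' - C.L.f^[N] c'' := by
      have := mul_le_mul_of_nonneg_left hmlen s2_pos.le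
      linarith [hlen3, hNgap]
    have hid : Real.sqrt 2 * (2*(Real.sqrt 2 - 1 - Real.sqrt 2/1000 - 1/1000))
        = 4 - 2*Real.sqrt 2 - 4/1000 - 2*Real.sqrt 2/1000 := by
      linear_combination ((2:ℝ) - 1/500) * s2_sq
    rw [hid] at hglow
    have hch2 : -C.ch ≤ Real.sqrt 2 / 2 := by linarith [hchub2, honeminus]
    have hqsb : C.qs < Real.sqrt 2 - 1 + 2/1000 := C.hqs1.trans hzRb
    linarith [s2_lt, hch2, hqsb, hglow]

end LorenzProof
namespace LorenzProof

set_option maxHeartbeats 1600000 in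
/-- the small middle case `P ∈ (ch, 0]`, `Q ∈ [0, w0)` : definite growth of the
image by a factor `6/5`. -/
lemma g4b {C : Ctx} {n c d} (h : Chain C n c d) (hP0 : C.L.f^[n] c ≤ 0)
    (hQ0 : 0 ≤ C.L.f^[n] d) (hch : C.ch < C.L.f^[n] c) (hw : C.L.f^[n] d < C.w0) :
    ∃ N cc dd, Chain C N cc dd ∧ C.L.f^[N] cc ≤ 0 ∧ 0 ≤ C.L.f^[N] dd ∧
      (6/5) * (C.L.f^[n] d - C.L.f^[n] c) ≤ C.L.f^[N] dd - C.L.f^[N] cc := by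
  have hgap : 0 < C.L.f^[n] d - C.L.f^[n] c := h.gap_pos
  have hfactor : (6/5 : ℝ) ≤ Real.sqrt 2 * (24/25) := by linarith [s2_gt]
  rcases le_or_gt ((C.L.f^[n] d - C.L.f^[n] c)/2) (C.L.f^[n] d) with hcase | hcase
  · -- right route
    have hQpos : 0 < C.L.f^[n] d := by linarith
    have hQm : C.L.f^[n] d ∈ Ioc (0:ℝ) 1 := ⟨hQpos, h.Qmem.2.le⟩
    obtain ⟨e, he0, he1, he2⟩ := C.L.near0r (v := 0)
      (u := min (C.L.f^[n] d) ((C.L.f^[n] d - C.L.f^[n] c)/50)) (by norm_num)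
      (lt_min hQpos (by linarith))
    have heQ : e < C.L.f^[n] d := lt_of_lt_of_le he1 (min_le_left _ _)
    have hee : e ≤ (C.L.f^[n] d - C.L.f^[n] c)/50 := le_trans he1.le (min_le_right _ _)
    obtain ⟨c', d', _, _, h', hv1, hv2⟩ := h.refine (t₁ := e) (t₂ := C.L.f^[n] d)
      (le_trans hP0 he0.le) heQ le_rfl (Or.inr he0)
    have hQw : C.L.f (C.L.f^[n] d) < C.zL := by
      have := C.L.monoRlt hQm C.w0Ioc hw
      rwa [C.hw0] at this
    have hstep := h'.step (Or.inl (by rw [hv2]; linarith [C.hzL0]))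
    have hem : e ∈ Ioc (0:ℝ) 1 := ⟨he0, by linarith [hQm.2]⟩
    have hfem : C.L.f e ∈ Ico (-1:ℝ) 0 := by
      have hr := C.L.rng (x := e) (by linarith [he0]) hem.2 (ne_of_gt he0)
      exact ⟨hr.1.le, he2⟩
    have hfQm : C.L.f (C.L.f^[n] d) ∈ Ico (-1:ℝ) 0 := by
      have hr := C.L.rng (x := C.L.f^[n] d) (by linarith [hQpos]) hQm.2 (ne_of_gt hQpos)
      exact ⟨hr.1.le, by linarith [C.hzL0]⟩
    have hord1 : C.L.f e < C.L.f (C.L.f^[n] d) := C.L.monoRlt hem hQm heQ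
    have hc2 : C.L.f^[n+1+1] c' = C.L.f (C.L.f e) := by
      rw [Function.iterate_succ_apply', hv1]
    have hd2 : C.L.f^[n+1+1] d' = C.L.f (C.L.f (C.L.f^[n] d)) := by
      rw [Function.iterate_succ_apply', hv2]
    have hf2Q : C.L.f (C.L.f (C.L.f^[n] d)) < 0 := by
      have := C.L.monoLlt hfQm C.zLIco hQw
      rwa [C.hzL] at this
    have hstep2 := hstep.step (Or.inl (by rw [hd2]; exact hf2Q))
    have hord2 : C.L.f (C.L.f e) < C.L.f (C.L.f (C.L.f^[n] d)) := C.L.monoLlt hfem hfQm hord1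
    have hlen2 : 2*(C.L.f^[n] d - e) ≤
        C.L.f (C.L.f (C.L.f^[n] d)) - C.L.f (C.L.f e) := by
      have e1 := (C.L.expR e hem _ hQm heQ).le
      have e2 := (C.L.expL _ hfem _ hfQm hord1).le
      have e3 := mul_le_mul_of_nonneg_left e1 s2_pos.le
      have e4 : Real.sqrt 2 * Real.sqrt 2 * (C.L.f^[n] d - e) ≤
          C.L.f (C.L.f (C.L.f^[n] d)) - C.L.f (C.L.f e) := by linarith [e2, e3]
      rw [s2_sq] at e4
      exact e4
    have hf2em : C.L.f (C.L.f e) ∈ Ico (-1:ℝ) 0 := by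
      have hr := C.L.rng (x := C.L.f e) hfem.1 (by linarith [hfem.2]) (ne_of_lt hfem.2)
      exact ⟨hr.1.le, by linarith [hord2, hf2Q]⟩
    have hf2Qm : C.L.f (C.L.f (C.L.f^[n] d)) ∈ Ico (-1:ℝ) 0 := by
      have hr := C.L.rng (x := C.L.f (C.L.f^[n] d)) hfQm.1 (by linarith [hfQm.2])
        (ne_of_lt hfQm.2)
      exact ⟨hr.1.le, hf2Q⟩
    have hc3 : C.L.f^[n+1+1+1] c' = C.L.f (C.L.f (C.L.f e)) := by
      rw [Function.iterate_succ_apply', hc2]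
    have hd3 : C.L.f^[n+1+1+1] d' = C.L.f (C.L.f (C.L.f (C.L.f^[n] d))) := by
      rw [Function.iterate_succ_apply', hd2]
    have hlen3 := (C.L.expL _ hf2em _ hf2Qm hord2).le
    have hl3pos : 0 < C.L.f^[n+1+1+1] d' - C.L.f^[n+1+1+1] c' := hstep2.gap_pos
    obtain ⟨k, hk⟩ := pow_unbounded_of_one_lt
      (2 / (C.L.f^[n+1+1+1] d' - C.L.f^[n+1+1+1] c')) s2_gt1
    have hkk : 2 ≤ Real.sqrt 2 ^ k * (C.L.f^[n+1+1+1] d' - C.L.f^[n+1+1+1] c') := by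
      rw [div_lt_iff₀ hl3pos] at hk
      linarith
    obtain ⟨N, hN, hNp, hNq, hNgap⟩ := Chain.grow k (n+1+1+1) c' d' hstep2 hkk
    refine ⟨N, c', d', hN, hNp, hNq, ?_⟩
    rw [hc3, hd3] at hNgap
    have hs1 := mul_le_mul_of_nonneg_left hlen2 s2_pos.le
    have hs2 : (6/5 : ℝ) * (C.L.f^[n] d - C.L.f^[n] c) ≤
        Real.sqrt 2 * (24/25) * (C.L.f^[n] d - C.L.f^[n] c) :=
      mul_le_mul_of_nonneg_right hfactor hgap.le
    have hs3 : Real.sqrt 2 * (24/25) * (C.L.f^[n] d - C.L.f^[n] c) ≤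
        Real.sqrt 2 * (2*(C.L.f^[n] d - e)) := by
      have hq2 : (24/25) * (C.L.f^[n] d - C.L.f^[n] c) ≤ 2*(C.L.f^[n] d - e) := by
        linarith [hcase, hee]
      have := mul_le_mul_of_nonneg_left hq2 s2_pos.le
      linarith [this]
    linarith [hs1, hs2, hs3, hlen3, hNgap]
  · -- left route
    have hPneg : C.L.f^[n] c < 0 := by linarith
    have hPm : C.L.f^[n] c ∈ Ico (-1:ℝ) 0 := ⟨h.Pmem.1.le, hPneg⟩
    set ee := min (-(C.L.f^[n] c)/2) ((C.L.f^[n] d - C.L.f^[n] c)/50) with heedef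
    have heemin : ee ≤ -(C.L.f^[n] c)/2 := min_le_left _ _
    have hee0 : 0 < ee := lt_min (by linarith) (by linarith)
    have heeP : C.L.f^[n] c < -ee := by linarith
    have hee50 : ee ≤ (C.L.f^[n] d - C.L.f^[n] c)/50 := min_le_right _ _
    obtain ⟨c', d', _, _, h', hv1, hv2⟩ := h.refine (t₁ := C.L.f^[n] c) (t₂ := -ee)
      le_rfl heeP (by linarith) (Or.inl (by linarith))
    have hmee : -ee ∈ Ico (-1:ℝ) 0 := ⟨by linarith [hPm.1], by linarith⟩
    have hfP : C.zR < C.L.f (C.L.f^[n] c) := by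
      have := C.L.monoLlt C.chIco hPm hch
      rwa [C.hch] at this
    have hfPm : C.L.f (C.L.f^[n] c) ∈ Ioc (0:ℝ) 1 := by
      have hr := C.L.rng (x := C.L.f^[n] c) hPm.1 (by linarith [hPm.2]) (ne_of_lt hPneg)
      exact ⟨lt_trans C.hzR0 hfP, hr.2.le⟩
    have hord1 : C.L.f (C.L.f^[n] c) < C.L.f (-ee) := C.L.monoLlt hPm hmee heeP
    have hfeem : C.L.f (-ee) ∈ Ioc (0:ℝ) 1 := by
      have hr := C.L.rng (x := -ee) hmee.1 (by linarith [hmee.2]) (ne_of_lt hmee.2)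
      exact ⟨lt_trans hfPm.1 hord1, hr.2.le⟩
    have hstep := h'.step (Or.inr (by rw [hv1]; exact hfPm.1))
    have hc2 : C.L.f^[n+1+1] c' = C.L.f (C.L.f (C.L.f^[n] c)) := by
      rw [Function.iterate_succ_apply', hv1]
    have hd2 : C.L.f^[n+1+1] d' = C.L.f (C.L.f (-ee)) := by
      rw [Function.iterate_succ_apply', hv2]
    have hf2P : 0 < C.L.f (C.L.f (C.L.f^[n] c)) := by
      have := C.L.monoRlt C.zRIoc hfPm hfP
      rwa [C.hzR] at this
    have hord2 : C.L.f (C.L.f (C.L.f^[n] c)) < C.L.f (C.L.f (-ee)) :=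
      C.L.monoRlt hfPm hfeem hord1
    have hlen2 : 2*(-ee - C.L.f^[n] c) ≤
        C.L.f (C.L.f (-ee)) - C.L.f (C.L.f (C.L.f^[n] c)) := by
      have e1 := (C.L.expL _ hPm (-ee) hmee heeP).le
      have e2 := (C.L.expR _ hfPm _ hfeem hord1).le
      have e3 := mul_le_mul_of_nonneg_left e1 s2_pos.le
      have e4 : Real.sqrt 2 * Real.sqrt 2 * (-ee - C.L.f^[n] c) ≤
          C.L.f (C.L.f (-ee)) - C.L.f (C.L.f (C.L.f^[n] c)) := by linarith [e2, e3]
      rw [s2_sq] at e4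
      exact e4
    have hf2Pm : C.L.f (C.L.f (C.L.f^[n] c)) ∈ Ioc (0:ℝ) 1 := by
      have hr := C.L.rng (x := C.L.f (C.L.f^[n] c)) (by linarith [hfPm.1]) hfPm.2
        (ne_of_gt hfPm.1)
      exact ⟨hf2P, hr.2.le⟩
    have hf2eem : C.L.f (C.L.f (-ee)) ∈ Ioc (0:ℝ) 1 := by
      have hr := C.L.rng (x := C.L.f (-ee)) (by linarith [hfeem.1]) hfeem.2
        (ne_of_gt hfeem.1)
      exact ⟨lt_trans hf2P hord2, hr.2.le⟩
    have hstep2 := hstep.step (Or.inr (by rw [hc2]; exact hf2P))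
    have hc3 : C.L.f^[n+1+1+1] c' = C.L.f (C.L.f (C.L.f (C.L.f^[n] c))) := by
      rw [Function.iterate_succ_apply', hc2]
    have hd3 : C.L.f^[n+1+1+1] d' = C.L.f (C.L.f (C.L.f (-ee))) := by
      rw [Function.iterate_succ_apply', hd2]
    have hlen3 := (C.L.expR _ hf2Pm _ hf2eem hord2).le
    have hl3pos : 0 < C.L.f^[n+1+1+1] d' - C.L.f^[n+1+1+1] c' := hstep2.gap_pos
    obtain ⟨k, hk⟩ := pow_unbounded_of_one_lt
      (2 / (C.L.f^[n+1+1+1] d' - C.L.f^[n+1+1+1] c')) s2_gt1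
    have hkk : 2 ≤ Real.sqrt 2 ^ k * (C.L.f^[n+1+1+1] d' - C.L.f^[n+1+1+1] c') := by
      rw [div_lt_iff₀ hl3pos] at hk
      linarith
    obtain ⟨N, hN, hNp, hNq, hNgap⟩ := Chain.grow k (n+1+1+1) c' d' hstep2 hkk
    refine ⟨N, c', d', hN, hNp, hNq, ?_⟩
    rw [hc3, hd3] at hNgap
    have hs1 := mul_le_mul_of_nonneg_left hlen2 s2_pos.le
    have hs2 : (6/5 : ℝ) * (C.L.f^[n] d - C.L.f^[n] c) ≤
        Real.sqrt 2 * (24/25) * (C.L.f^[n] d - C.L.f^[n] c) :=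
      mul_le_mul_of_nonneg_right hfactor hgap.le
    have hs3 : Real.sqrt 2 * (24/25) * (C.L.f^[n] d - C.L.f^[n] c) ≤
        Real.sqrt 2 * (2*(-ee - C.L.f^[n] c)) := by
      have hq2 : (24/25) * (C.L.f^[n] d - C.L.f^[n] c) ≤ 2*(-ee - C.L.f^[n] c) := by
        linarith [hcase, hee50, hQ0]
      have := mul_le_mul_of_nonneg_left hq2 s2_pos.le
      linarith [this]
    linarith [hs1, hs2, hs3, hlen3, hNgap]

lemma dispatch {C : Ctx} : ∀ (k : ℕ) {n : ℕ} {c d : ℝ}, Chain C n c d →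
    C.L.f^[n] c ≤ 0 → 0 ≤ C.L.f^[n] d →
    C.qs - C.ch < (6/5)^k * (C.L.f^[n] d - C.L.f^[n] c) → Final C := by
  intro k
  induction k with
  | zero =>
    intro n c d h hP hQ hk
    simp only [pow_zero, one_mul] at hk
    exact finish_big h hP hQ hk
  | succ k ih =>
    intro n c d h hP hQ hk
    rcases lt_or_ge C.qs (C.L.f^[n] d) with h1 | h1
    · exact esc h hP h1
    · rcases le_or_gt (C.L.f^[n] c) C.zL with h2 | h2
      · exact g2a h hQ h2
      · rcases le_or_gt (C.L.f^[n] c) C.ch with h3 | h3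
        · exact g23 h hQ h2 h3
        · rcases le_or_gt C.w0 (C.L.f^[n] d) with h4 | h4
          · exact g4a h hP h3 h4 h1
          · obtain ⟨N, cc, dd, hN, hNp, hNq, hNgap⟩ := g4b h hP hQ h3 h4
            apply ih hN hNp hNq
            have e1 : ((6:ℝ)/5)^(k+1) * (C.L.f^[n] d - C.L.f^[n] c)
                = (6/5)^k * ((6/5) * (C.L.f^[n] d - C.L.f^[n] c)) := by
              rw [pow_succ]; ring
            have e2 := mul_le_mul_of_nonneg_left hNgap
              (pow_nonneg (by norm_num : (0:ℝ) ≤ 6/5) k)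
            linarith [e1 ▸ hk]

end LorenzProof
namespace LorenzProof

lemma LD.key (L : LD) (qs ps : ℝ) (hqs0 : 0 < qs) (hqs1 : qs < 1) (hps0 : -1 < ps)
    (hps1 : ps < 0) (hfq : L.f qs = ps) (hfp : L.f ps = qs)
    (hxbex : ∃ x, 0 < x ∧ x < 1 ∧ qs < L.f x) :
    ∀ a b : ℝ, a < b → Ioo a b ⊆ Ioo (-1:ℝ) 1 \ {0} →
      ∃ n : ℕ, 1 ≤ n ∧ ∃ x ∈ Ioo a b, (∀ m, m < n → L.f^[m] x ≠ 0) ∧ L.f^[n] x = x := by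
  intro a b hab hsub
  obtain ⟨e₁, he₁0, he₁1, he₁2⟩ := L.near0r (v := 0) (u := 1) (by norm_num) one_pos
  have hf1 : 0 < L.f 1 := by have := L.f1_gt; linarith [s2_gt1]
  have hcR1 : ContinuousOn L.f (Icc e₁ 1) :=
    L.cR.mono (fun y hy => ⟨lt_of_lt_of_le he₁0 hy.1, hy.2⟩)
  obtain ⟨zR, hzRm, hzR⟩ := intermediate_value_Icc he₁1.le hcR1
    (mem_Icc.2 ⟨he₁2.le, hf1.le⟩)
  have hzR0 : 0 < zR := lt_of_lt_of_le he₁0 hzRm.1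
  have hzR1 : zR < 1 := lt_of_le_of_ne hzRm.2 (fun hh => by
    rw [hh] at hzR; exact hf1.ne' hzR)
  have hqszR : qs < zR := by
    by_contra hcon
    push_neg at hcon
    have := L.monoRle ⟨hzR0, hzRm.2⟩ ⟨hqs0, hqs1.le⟩ hcon
    rw [hzR, hfq] at this
    linarith
  obtain ⟨e₂, he₂0, he₂1, he₂2⟩ := L.near0l (v := 0) (u := -(1:ℝ)/2) (by norm_num)
    (by norm_num)
  have hfm1 : L.f (-1) < 0 := by have := L.fneg1_lt; linarith [s2_gt1]
  have hcL1 : ContinuousOn L.f (Icc (-1) e₂) :=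
    L.cL.mono (fun y hy => ⟨hy.1, lt_of_le_of_lt hy.2 he₂1⟩)
  obtain ⟨zL, hzLm, hzL⟩ := intermediate_value_Icc (by linarith : (-1:ℝ) ≤ e₂) hcL1
    (mem_Icc.2 ⟨hfm1.le, he₂2.le⟩)
  have hzL1 : -1 < zL := lt_of_le_of_ne hzLm.1 (fun hh => by
    rw [← hh] at hzL; exact hfm1.ne hzL)
  have hzL0 : zL < 0 := lt_of_le_of_lt hzLm.2 he₂1
  have hzLps : zL < ps := by
    by_contra hcon
    push_neg at hcon
    have := L.monoLle ⟨hps0.le, hps1⟩ ⟨hzL1.le, hzL0⟩ hcon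
    rw [hfp, hzL] at this
    linarith
  obtain ⟨x₁, hx₁0, hx₁1, hx₁2⟩ := L.near0r (v := zL) (u := qs) (by linarith) hqs0
  have hcRw : ContinuousOn L.f (Icc x₁ qs) :=
    L.cR.mono (fun y hy => ⟨lt_of_lt_of_le hx₁0 hy.1, le_trans hy.2 hqs1.le⟩)
  obtain ⟨w0, hw0m, hw0⟩ := intermediate_value_Icc hx₁1.le hcRw
    (mem_Icc.2 ⟨hx₁2.le, by rw [hfq]; linarith⟩)
  have hw0a : 0 < w0 := lt_of_lt_of_le hx₁0 hw0m.1
  have hw0b : w0 < qs := lt_of_le_of_ne hw0m.2 (fun hh => by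
    rw [hh, hfq] at hw0; linarith)
  obtain ⟨e₃, he₃0, he₃1, he₃2⟩ := L.near0l (v := zR) (u := ps) hzR1 hps1
  have hcLc : ContinuousOn L.f (Icc ps e₃) :=
    L.cL.mono (fun y hy => ⟨le_trans hps0.le hy.1, lt_of_le_of_lt hy.2 he₃1⟩)
  obtain ⟨ch, hchm, hch⟩ := intermediate_value_Icc he₃0.le hcLc
    (mem_Icc.2 ⟨by rw [hfp]; linarith, he₃2.le⟩)
  have hch1 : ps < ch := lt_of_le_of_ne hchm.1 (fun hh => by
    rw [← hh, hfp] at hch; linarith)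
  have hch2 : ch < 0 := lt_of_le_of_lt hchm.2 he₃1
  obtain ⟨xb, hxb1, hxb2, hxb3⟩ := hxbex
  obtain ⟨C, hCL, hCa, hCb, hClo, hChi⟩ :
      ∃ C : Ctx, C.L = L ∧ C.a = a ∧ C.b = b ∧ C.lo = (3*a+b)/4 ∧ C.hi = (a+3*b)/4 :=
    ⟨⟨L, a, b, (3*a+b)/4, (a+3*b)/4, zR, zL, qs, ps, w0, ch, xb,
      hab, hsub, by linarith, by linarith, by linarith, hzR, hzR0, hzR1,
      hzL, hzL0, hzL1, hqs0, hqszR, hfq, hfp, hps0, hps1, hw0a, hw0b, hw0,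
      hch1, hch2, hch, hxb1, hxb2, hxb3⟩, rfl, rfl, rfl, rfl, rfl⟩
  have hchain0 : Chain C 0 C.lo C.hi := by
    refine { hcd := C.hlh, sub := subset_rfl, mem := ?_, nz := ?_, expn := ?_, cont := ?_ }
    · intro x hx m hm
      have hm0 : m = 0 := Nat.le_zero.1 hm
      subst hm0
      simpa using (C.seedmem hx).1
    · intro x _ m hm
      exact absurd hm (Nat.not_lt_zero m)
    · intro x _ y _ hxy
      simp only [pow_zero, one_mul, Function.iterate_zero_apply]
      exact le_rfl
    · simpa using continuousOn_id
  have hgap0 : 0 < C.hi - C.lo := by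
    rw [hClo, hChi]
    linarith
  obtain ⟨k, hk⟩ := pow_unbounded_of_one_lt (2 / (C.hi - C.lo)) s2_gt1
  have hkk : 2 ≤ Real.sqrt 2 ^ k * (C.L.f^[0] C.hi - C.L.f^[0] C.lo) := by
    simp only [Function.iterate_zero_apply]
    rw [div_lt_iff₀ hgap0] at hk
    linarith
  obtain ⟨N, hN, hNp, hNq, _⟩ := Chain.grow k 0 C.lo C.hi hchain0 hkk
  obtain ⟨k₂, hk₂⟩ := pow_unbounded_of_one_lt
    ((C.qs - C.ch) / (C.L.f^[N] C.hi - C.L.f^[N] C.lo)) (by norm_num : (1:ℝ) < 6/5)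
  have hfin : Final C := by
    apply dispatch k₂ hN hNp hNq
    rw [div_lt_iff₀ hN.gap_pos] at hk₂
    linarith
  obtain ⟨n, hn1, x, hx, hnz, hfix⟩ := hfin
  rw [hCa, hCb] at hx
  rw [hCL] at hnz hfix
  exact ⟨n, hn1, x, hx, hnz, hfix⟩

/-- existence of the period-two orbit straddling `0`. -/
lemma LD.exists_qsps (L : LD) : ∃ qs ps : ℝ, 0 < qs ∧ qs < 1 ∧ -1 < ps ∧ ps < 0 ∧
    L.f qs = ps ∧ L.f ps = qs := by
  obtain ⟨e₁, he₁0, he₁1, he₁2⟩ := L.near0r (v := 0) (u := 1) (by norm_num) one_pos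
  have hf1 : 0 < L.f 1 := by have := L.f1_gt; linarith [s2_gt1]
  have hcR1 : ContinuousOn L.f (Icc e₁ 1) :=
    L.cR.mono (fun y hy => ⟨lt_of_lt_of_le he₁0 hy.1, hy.2⟩)
  obtain ⟨zR, hzRm, hzR⟩ := intermediate_value_Icc he₁1.le hcR1
    (mem_Icc.2 ⟨he₁2.le, hf1.le⟩)
  have hzR0 : 0 < zR := lt_of_lt_of_le he₁0 hzRm.1
  have hzR1 : zR < 1 := lt_of_le_of_ne hzRm.2 (fun hh => by
    rw [hh] at hzR; exact hf1.ne' hzR)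
  have hneg : ∀ x, 0 < x → x < zR → L.f x < 0 := by
    intro x hx0 hx1
    have := L.monoRlt ⟨hx0, by linarith⟩ ⟨hzR0, hzRm.2⟩ hx1
    rwa [hzR] at this
  have hAneg : L.f (-1) < 0 := by have := L.fneg1_lt; linarith [s2_gt1]
  have hT1 : Tendsto L.f (𝓝[>] (0:ℝ)) (𝓝[Ico (-1:ℝ) 0] (-1)) := by
    rw [tendsto_nhdsWithin_iff]
    refine ⟨L.limr, ?_⟩
    have hev1 := L.limr.eventually_lt_const (show (-1:ℝ) < 0 by norm_num)
    have hev2 : ∀ᶠ x in 𝓝[>] (0:ℝ), x ∈ Ioo (0:ℝ) 1 :=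
      eventually_mem_set.2 (Ioo_mem_nhdsGT one_pos)
    filter_upwards [hev1, hev2] with x hx1 hx2
    exact ⟨(L.rng (x := x) (by linarith [hx2.1]) hx2.2.le (ne_of_gt hx2.1)).1.le, hx1⟩
  have hT2 : Tendsto (fun x => L.f (L.f x)) (𝓝[>] (0:ℝ)) (𝓝 (L.f (-1))) := by
    have hc : ContinuousWithinAt L.f (Ico (-1:ℝ) 0) (-1) := L.cL (-1) ⟨le_rfl, by norm_num⟩
    exact Filter.Tendsto.comp hc hT1
  obtain ⟨x₁, hx₁a, hx₁b⟩ := ((hT2.eventually_lt_const hAneg).and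
    (eventually_mem_set.2 (Ioo_mem_nhdsGT hzR0))).exists
  have hT3 : Tendsto L.f (𝓝[Ioo x₁ zR] zR) (𝓝[Iio (0:ℝ)] 0) := by
    rw [tendsto_nhdsWithin_iff]
    constructor
    · have hc : ContinuousWithinAt L.f (Ioc (0:ℝ) 1) zR := L.cR zR ⟨hzR0, hzRm.2⟩
      have h2 : Tendsto L.f (𝓝[Ioo x₁ zR] zR) (𝓝 (L.f zR)) :=
        Filter.Tendsto.mono_left hc (nhdsWithin_mono _ (fun y hy =>
          ⟨lt_trans hx₁b.1 hy.1, le_trans hy.2.le hzRm.2⟩))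
      rwa [hzR] at h2
    · filter_upwards [eventually_mem_set.2 self_mem_nhdsWithin] with y hy
      exact hneg y (lt_trans hx₁b.1 hy.1) hy.2
  have hT4 : Tendsto (fun x => L.f (L.f x)) (𝓝[Ioo x₁ zR] zR) (𝓝 1) := L.liml.comp hT3
  have hNB : (𝓝[Ioo x₁ zR] zR).NeBot := by
    apply mem_closure_iff_nhdsWithin_neBot.1
    rw [closure_Ioo (ne_of_lt hx₁b.2)]
    exact ⟨hx₁b.2.le, le_rfl⟩
  obtain ⟨x₂, hx₂a, hx₂b⟩ := ((hT4.eventually_const_lt hzR1).and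
    (eventually_mem_set.2 self_mem_nhdsWithin)).exists
  have hmaps : MapsTo L.f (Icc x₁ x₂) (Ico (-1:ℝ) 0) := by
    intro y hy
    constructor
    · exact (L.rng (x := y) (by linarith [hx₁b.1, hy.1])
        (by linarith [hy.2, hx₂b.2, hzR1])
        (ne_of_gt (lt_of_lt_of_le hx₁b.1 hy.1))).1.le
    · exact hneg y (lt_of_lt_of_le hx₁b.1 hy.1) (lt_of_le_of_lt hy.2 hx₂b.2)
  have hgc : ContinuousOn (fun x => L.f (L.f x) - x) (Icc x₁ x₂) := by
    apply ContinuousOn.sub _ continuousOn_id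
    exact L.cL.comp (L.cR.mono (fun y hy => ⟨lt_of_lt_of_le hx₁b.1 hy.1,
      by linarith [hy.2, hx₂b.2, hzR1]⟩)) hmaps
  obtain ⟨qs, hqsm, hqseq⟩ := intermediate_value_Icc hx₂b.1.le hgc
    (mem_Icc.2 ⟨by show L.f (L.f x₁) - x₁ ≤ 0; linarith [hx₁a, hx₁b.1],
      by show (0:ℝ) ≤ L.f (L.f x₂) - x₂; linarith [hx₂a, hx₂b.2]⟩)
  have hqs0 : 0 < qs := lt_of_lt_of_le hx₁b.1 hqsm.1
  have hqs1 : qs < 1 := by linarith [hqsm.2, hx₂b.2, hzR1]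
  have hfix : L.f (L.f qs) = qs := by
    have h9 : L.f (L.f qs) - qs = 0 := by exact hqseq
    linarith
  refine ⟨qs, L.f qs, hqs0, hqs1, ?_, ?_, rfl, hfix⟩
  · exact (L.rng (by linarith) (by linarith) (ne_of_gt hqs0)).1
  · exact hneg qs hqs0 (by linarith [hqsm.2, hx₂b.2])

lemma LD.main (L : LD) : ∀ a b : ℝ, a < b → Ioo a b ⊆ Ioo (-1:ℝ) 1 \ {0} →
    ∃ n : ℕ, 1 ≤ n ∧ ∃ x ∈ Ioo a b, (∀ m, m < n → L.f^[m] x ≠ 0) ∧ L.f^[n] x = x := by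
  obtain ⟨qs, ps, hqs0, hqs1, hps0, hps1, hfq, hfp⟩ := L.exists_qsps
  rcases lt_or_ge qs (L.f 1) with hR | hR
  · have hxbex : ∃ x, 0 < x ∧ x < 1 ∧ qs < L.f x := by
      have hc : ContinuousWithinAt L.f (Ioc (0:ℝ) 1) 1 := L.cR 1 ⟨one_pos, le_rfl⟩
      have h2 : Tendsto L.f (𝓝[Ioo (0:ℝ) 1] 1) (𝓝 (L.f 1)) :=
        Filter.Tendsto.mono_left hc (nhdsWithin_mono _ (fun y hy => ⟨hy.1, hy.2.le⟩))
      have hNB : (𝓝[Ioo (0:ℝ) 1] (1:ℝ)).NeBot := by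
        apply mem_closure_iff_nhdsWithin_neBot.1
        rw [closure_Ioo (by norm_num : (0:ℝ) ≠ 1)]
        exact ⟨by norm_num, le_rfl⟩
      obtain ⟨x, hx1, hx2⟩ := ((h2.eventually_const_lt hR).and
        (eventually_mem_set.2 self_mem_nhdsWithin)).exists
      exact ⟨x, hx2.1, hx2.2, hx1⟩
    exact L.key qs ps hqs0 hqs1 hps0 hps1 hfq hfp hxbex
  · -- mirror case
    have hpsq2 : Real.sqrt 2 * qs - 1 < ps := by
      have h1 := L.expR (qs/2) ⟨by linarith, by linarith⟩ qs ⟨hqs0, hqs1.le⟩ (by linarith)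
      have h2 := L.fR_lb (x := qs/2) ⟨by linarith, by linarith⟩
      rw [hfq] at h1
      linarith
    have hqsgt : Real.sqrt 2 - 1 < qs := lt_of_lt_of_le L.f1_gt hR
    have hA : L.f (-1) < ps := by
      have h3 := L.fneg1_lt
      have h4 : Real.sqrt 2 * (Real.sqrt 2 - 1) < Real.sqrt 2 * qs :=
        mul_lt_mul_of_pos_left hqsgt s2_pos
      have h5 : Real.sqrt 2 * (Real.sqrt 2 - 1) = 2 - Real.sqrt 2 := by
        linear_combination s2_sq
      linarith
    have hmx : ∃ y, -1 < y ∧ y < 0 ∧ L.f y < ps := by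
      have hc : ContinuousWithinAt L.f (Ico (-1:ℝ) 0) (-1) := L.cL (-1) ⟨le_rfl, by norm_num⟩
      have h2 : Tendsto L.f (𝓝[Ioo (-1:ℝ) 0] (-1)) (𝓝 (L.f (-1))) :=
        Filter.Tendsto.mono_left hc (nhdsWithin_mono _ (fun y hy => ⟨hy.1.le, hy.2⟩))
      have hNB : (𝓝[Ioo (-1:ℝ) 0] (-1:ℝ)).NeBot := by
        apply mem_closure_iff_nhdsWithin_neBot.1
        rw [closure_Ioo (by norm_num : (-1:ℝ) ≠ 0)]
        exact ⟨le_rfl, by norm_num⟩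
      obtain ⟨y, hy1, hy2⟩ := ((h2.eventually_lt_const hA).and
        (eventually_mem_set.2 self_mem_nhdsWithin)).exists
      exact ⟨y, hy2.1, hy2.2, hy1⟩
    obtain ⟨y, hy1, hy2, hy3⟩ := hmx
    intro a b hab hsub
    have hsub' : Ioo (-b) (-a) ⊆ Ioo (-1:ℝ) 1 \ {0} := by
      intro x hx
      have hx' : -x ∈ Ioo a b := ⟨by linarith [hx.2], by linarith [hx.1]⟩
      have h5 := hsub hx'
      refine ⟨⟨by linarith [h5.1.2], by linarith [h5.1.1]⟩, ?_⟩
      simp only [mem_singleton_iff]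
      intro hh
      apply h5.2
      simp [hh]
    have hfq' : L.mirror.f (-ps) = -qs := by
      show -L.f (-(-ps)) = -qs
      rw [neg_neg, hfp]
    have hfp' : L.mirror.f (-qs) = -ps := by
      show -L.f (-(-qs)) = -ps
      rw [neg_neg, hfq]
    have hxb' : ∃ x, 0 < x ∧ x < 1 ∧ -ps < L.mirror.f x := by
      refine ⟨-y, by linarith, by linarith, ?_⟩
      show -ps < -L.f (-(-y))
      rw [neg_neg]
      linarith
    obtain ⟨n, hn1, y₀, hy₀, hnz, hfix⟩ := L.mirror.key (-ps) (-qs) (by linarith)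
      (by linarith) (by linarith) (by linarith) hfq' hfp' hxb' (-b) (-a)
      (by linarith) hsub'
    refine ⟨n, hn1, -y₀, ⟨by linarith [hy₀.2], by linarith [hy₀.1]⟩, ?_, ?_⟩
    · intro m hm' hzero
      apply hnz m hm'
      have h7 : (L.mirror.f)^[m] y₀ = -(L.f^[m] (-y₀)) := by
        have h8 := L.mirror_iter m (-y₀)
        rwa [neg_neg] at h8
      rw [h7, hzero, neg_zero]
    · have h7 : (L.mirror.f)^[n] y₀ = -(L.f^[n] (-y₀)) := by
        have h8 := L.mirror_iter n (-y₀)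
        rwa [neg_neg] at h8
      rw [h7] at hfix
      linarith [hfix]
end LorenzProof

open Set Filter

/-- Periodic points of a Lorenz expanding map are dense: every nonempty open
interval `J ⊆ (-1,1) \ {0}` contains a periodic point. -/
theorem lorenz_periodic_points_dense
    (f f' : ℝ → ℝ)
    (hderiv : ∀ x ∈ Icc (-1:ℝ) 1 \ {0},
      HasDerivWithinAt f (f' x) (Icc (-1:ℝ) 1 \ {0}) x)
    (hrange : ∀ x ∈ Icc (-1:ℝ) 1 \ {0}, f x ∈ Ioo (-1:ℝ) 1)
    (hlim_left : Tendsto f (nhdsWithin 0 (Iio 0)) (nhds 1))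
    (hlim_right : Tendsto f (nhdsWithin 0 (Ioi 0)) (nhds (-1)))
    (hexp : ∀ x ∈ Icc (-1:ℝ) 1 \ {0}, f' x > Real.sqrt 2) :
    ∀ a b : ℝ, a < b → Ioo a b ⊆ Ioo (-1:ℝ) 1 \ {0} →
      ∃ n : ℕ, 1 ≤ n ∧ ∃ x ∈ Ioo a b,
        (∀ m < n, f^[m] x ≠ 0) ∧ f^[n] x = x := by
  have hIcoSub : Ico (-1:ℝ) 0 ⊆ Icc (-1:ℝ) 1 \ {0} := fun x hx =>
    LorenzProof.memS hx.1 (by linarith [hx.2]) (ne_of_lt hx.2)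
  have hIocSub : Ioc (0:ℝ) 1 ⊆ Icc (-1:ℝ) 1 \ {0} := fun x hx =>
    LorenzProof.memS (by linarith [hx.1]) hx.2 (ne_of_gt hx.1)
  have hcL : ContinuousOn f (Ico (-1:ℝ) 0) := fun x hx =>
    ((hderiv x (hIcoSub hx)).continuousWithinAt).mono hIcoSub
  have hcR : ContinuousOn f (Ioc (0:ℝ) 1) := fun x hx =>
    ((hderiv x (hIocSub hx)).continuousWithinAt).mono hIocSub
  have hexpL : ∀ x ∈ Ico (-1:ℝ) 0, ∀ y ∈ Ico (-1:ℝ) 0, x < y →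
      Real.sqrt 2 * (y - x) < f y - f x := by
    have hderAt : ∀ x ∈ interior (Ico (-1:ℝ) 0), HasDerivAt f (f' x) x := by
      intro x hx
      rw [interior_Ico] at hx
      have hmem : Ioo (-1:ℝ) 0 ∈ 𝓝 x := isOpen_Ioo.mem_nhds hx
      have hmem2 : Icc (-1:ℝ) 1 \ {0} ∈ 𝓝 x := Filter.mem_of_superset hmem
        (fun y hy => LorenzProof.memS hy.1.le (by linarith [hy.2]) (ne_of_lt hy.2))
      exact (hderiv x (LorenzProof.memS hx.1.le (by linarith [hx.2])
        (ne_of_lt hx.2))).hasDerivAt hmem2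
    have hdiff : DifferentiableOn ℝ f (interior (Ico (-1:ℝ) 0)) := fun x hx =>
      (hderAt x hx).differentiableAt.differentiableWithinAt
    have hbound : ∀ x ∈ interior (Ico (-1:ℝ) 0), Real.sqrt 2 < deriv f x := by
      intro x hx
      rw [(hderAt x hx).deriv]
      rw [interior_Ico] at hx
      exact hexp x (LorenzProof.memS hx.1.le (by linarith [hx.2]) (ne_of_lt hx.2))
    exact fun x hx y hy hxy =>
      (convex_Ico _ _).mul_sub_lt_image_sub_of_lt_deriv hcL hdiff hbound x hx y hy hxy
  have hexpR : ∀ x ∈ Ioc (0:ℝ) 1, ∀ y ∈ Ioc (0:ℝ) 1, x < y →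
      Real.sqrt 2 * (y - x) < f y - f x := by
    have hderAt : ∀ x ∈ interior (Ioc (0:ℝ) 1), HasDerivAt f (f' x) x := by
      intro x hx
      rw [interior_Ioc] at hx
      have hmem : Ioo (0:ℝ) 1 ∈ 𝓝 x := isOpen_Ioo.mem_nhds hx
      have hmem2 : Icc (-1:ℝ) 1 \ {0} ∈ 𝓝 x := Filter.mem_of_superset hmem
        (fun y hy => LorenzProof.memS (by linarith [hy.1]) hy.2.le (ne_of_gt hy.1))
      exact (hderiv x (LorenzProof.memS (by linarith [hx.1]) hx.2.le
        (ne_of_gt hx.1))).hasDerivAt hmem2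
    have hdiff : DifferentiableOn ℝ f (interior (Ioc (0:ℝ) 1)) := fun x hx =>
      (hderAt x hx).differentiableAt.differentiableWithinAt
    have hbound : ∀ x ∈ interior (Ioc (0:ℝ) 1), Real.sqrt 2 < deriv f x := by
      intro x hx
      rw [(hderAt x hx).deriv]
      rw [interior_Ioc] at hx
      exact hexp x (LorenzProof.memS (by linarith [hx.1]) hx.2.le (ne_of_gt hx.1))
    exact fun x hx y hy hxy =>
      (convex_Ioc _ _).mul_sub_lt_image_sub_of_lt_deriv hcR hdiff hbound x hx y hy hxy
  intro a b hab hsub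
  obtain ⟨n, hn, x, hx, hnz, hfix⟩ :=
    LorenzProof.LD.main ⟨f, hcL, hcR, hrange, hlim_left, hlim_right, hexpL, hexpR⟩
      a b hab hsub
  exact ⟨n, hn, x, hx, fun m hm => hnz m hm, hfix⟩
end

section
/- Let (M, d) be a metric space, let μ, ν ∈ M, and suppose there are sequences (p_n) and (q_n) in M with p_n → μ and q_n → ν, a continuous path in M from p_1 to q_1, and for every n ≥ 1 continuous paths in M from p_n to p_{n+1} and from q_n to q_{n+1} whose images have diameter at most ε_n, where ε_n → 0. Then there is a continuous path in M from μ to ν; in particular μ and ν lie in the same path component of M. -/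
/-!
Laying the paths `p n ⟶ p (n + 1)` end to end along the intervals `[n, n + 1]` gives a continuous
map `ℝ → M`. On `[n, n + 1]` it stays within `diam (γ n)` of `p n`, so it tends to `μ` at infinity,
and compressing `[0, ∞]` onto `[0, 1]` turns it into a path from `p 0` to `μ`. Two such chains,
joined through a path from `p 0` to `q 0`, connect `μ` to `ν`.
-/

open Set Filter Metric Topology

theorem tendsto_inv_one_sub_sub_one_nhdsLT_one :
    Tendsto (fun t : ℝ => (1 - t)⁻¹ - 1) (𝓝[<] 1) atTop := by
  refine tendsto_atTop_add_const_right _ (-1) (tendsto_inv_nhdsGT_zero.comp ?_)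
  exact tendsto_nhdsWithin_of_tendsto_nhds_of_eventually_within _
    (((continuous_sub_left 1).tendsto' 1 0 (sub_self 1)).mono_left nhdsWithin_le_nhds)
    (eventually_nhdsWithin_of_forall fun _ ht => mem_Ioi.2 (sub_pos.2 ht))

theorem Joined.of_tendsto_atTop {X : Type*} [TopologicalSpace X] {g : ℝ → X} {x : X}
    (hg : Continuous g) (hx : Tendsto g atTop (𝓝 x)) : Joined (g 0) x := by
  set f : ℝ → X := fun t => if t < 1 then g ((1 - t)⁻¹ - 1) else x
  have hf : Continuous f := by
    refine continuous_iff_continuousAt.2 fun t => ?_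
    rcases lt_trichotomy t 1 with ht | rfl | ht
    · have : ContinuousAt (fun t : ℝ => (1 - t)⁻¹ - 1) t := by
        fun_prop (disch := exact (sub_pos.2 ht).ne')
      exact (hg.continuousAt.comp this).congr
        (eventually_lt_nhds ht |>.mono fun s hs => (if_pos hs).symm)
    · rw [ContinuousAt, show f 1 = x from if_neg (lt_irrefl 1), ← nhdsLT_sup_nhdsGE, tendsto_sup]
      refine ⟨(hx.comp tendsto_inv_one_sub_sub_one_nhdsLT_one).congr' ?_,
        tendsto_const_nhds.congr' ?_⟩
      · exact eventually_nhdsWithin_of_forall fun s hs => (if_pos hs).symm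
      · exact eventually_nhdsWithin_of_forall fun s hs => (if_neg (not_lt.2 hs)).symm
    · exact continuousAt_const.congr
        (eventually_gt_nhds ht |>.mono fun s hs => (if_neg (not_lt.2 hs.le)).symm)
  exact ⟨⟨⟨fun t => f t, hf.comp continuous_subtype_val⟩, by simp [f], by simp [f]⟩⟩

namespace Path

variable {X : Type*} [TopologicalSpace X] {p : ℕ → X}

noncomputable def seqConcat (γ : ∀ n, Path (p n) (p (n + 1))) (s : ℝ) : X :=
  (γ ⌊s⌋₊).extend (s - ⌊s⌋₊)

variable (γ : ∀ n, Path (p n) (p (n + 1)))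

theorem seqConcat_zero : seqConcat γ 0 = p 0 := by
  simp [seqConcat]

theorem seqConcat_eq_extend {n : ℕ} {s : ℝ} (hs : s ∈ Icc (n : ℝ) (n + 1)) :
    seqConcat γ s = (γ n).extend (s - n) := by
  rcases eq_or_lt_of_le hs.2 with rfl | hlt
  · rw [seqConcat, show ((n : ℝ) + 1) = ((n + 1 : ℕ) : ℝ) by push_cast; ring, Nat.floor_natCast,
      sub_self, extend_zero, Nat.cast_add_one, add_sub_cancel_left, extend_one]
  · rw [seqConcat, Nat.floor_eq_on_Ico n s ⟨hs.1, hlt⟩]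

theorem seqConcat_mem_range (s : ℝ) : seqConcat γ s ∈ range (γ ⌊s⌋₊) := by
  rw [seqConcat, ← extend_range]
  exact mem_range_self _

theorem continuousOn_seqConcat_Iic (n : ℕ) : ContinuousOn (seqConcat γ) (Iic (n : ℝ)) := by
  induction n with
  | zero =>
    refine (γ 0).continuous_extend.continuousOn.congr fun s hs => ?_
    rw [seqConcat, Nat.floor_eq_zero.2 (by simp at hs; linarith), Nat.cast_zero, sub_zero]
  | succ n ih =>
    rw [Nat.cast_succ, ← Iic_union_Icc_eq_Iic (by linarith : (n : ℝ) ≤ n + 1)]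
    exact ih.union_of_isClosed
      (((γ n).continuous_extend.comp (continuous_sub_right _)).continuousOn.congr
        fun s hs => seqConcat_eq_extend γ hs) isClosed_Iic isClosed_Icc

theorem continuous_seqConcat : Continuous (seqConcat γ) :=
  continuous_iff_continuousAt.2 fun s =>
    (continuousOn_seqConcat_Iic γ (⌊s⌋₊ + 1)).continuousAt
      (Iic_mem_nhds (by push_cast; exact Nat.lt_floor_add_one s))

end Path

theorem Path.tendsto_seqConcat_atTop {M : Type*} [PseudoMetricSpace M] {p : ℕ → M} {μ : M}
    (γ : ∀ n, Path (p n) (p (n + 1))) (hp : Tendsto p atTop (𝓝 μ))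
    (hγ : Tendsto (fun n => diam (range (γ n))) atTop (𝓝 0)) :
    Tendsto (Path.seqConcat γ) atTop (𝓝 μ) :=
  (hp.comp tendsto_nat_floor_atTop).congr_dist <|
    squeeze_zero (fun _ => dist_nonneg)
      (fun s => dist_le_diam_of_mem (isCompact_range (γ _).continuous).isBounded
        ⟨0, (γ _).source⟩ (Path.seqConcat_mem_range γ s))
      (hγ.comp tendsto_nat_floor_atTop)

theorem joined_of_tendsto_of_diam_tendsto_zero {M : Type*} [PseudoMetricSpace M] {p : ℕ → M}
    {μ : M} (γ : ∀ n, Path (p n) (p (n + 1))) (hp : Tendsto p atTop (𝓝 μ))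
    (hγ : Tendsto (fun n => diam (range (γ n))) atTop (𝓝 0)) :
    Joined (p 0) μ := by
  simpa only [Path.seqConcat_zero] using
    Joined.of_tendsto_atTop (Path.continuous_seqConcat γ) (Path.tendsto_seqConcat_atTop γ hp hγ)

/-- Concatenating chains of paths with shrinking diameters: if `p n → μ`,
`q n → ν`, `p 0` and `q 0` are joined by a path, and consecutive terms of the
chains are joined by paths whose images have diameter at most `ε n → 0`, then
`μ` and `ν` are joined by a path. -/
theorem joined_of_path_chains
    {M : Type*} [MetricSpace M] (μ ν : M) (p q : ℕ → M) (ε : ℕ → ℝ)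
    (hp : Tendsto p atTop (nhds μ)) (hq : Tendsto q atTop (nhds ν))
    (hε : Tendsto ε atTop (nhds 0))
    (h0 : Joined (p 0) (q 0))
    (hpchain : ∀ n : ℕ, ∃ γ : Path (p n) (p (n + 1)),
      Metric.diam (Set.range γ) ≤ ε n)
    (hqchain : ∀ n : ℕ, ∃ γ : Path (q n) (q (n + 1)),
      Metric.diam (Set.range γ) ≤ ε n) :
    Joined μ ν := by
  choose γp hγp using hpchain
  choose γq hγq using hqchain
  have hμ := joined_of_tendsto_of_diam_tendsto_zero γp hp
    (squeeze_zero (fun _ => diam_nonneg) hγp hε)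
  have hν := joined_of_tendsto_of_diam_tendsto_zero γq hq
    (squeeze_zero (fun _ => diam_nonneg) hγq hε)
  exact hμ.symm.trans (h0.trans hν)
end
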